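/- arXiv:2406.02292 — 9 statements merged into one kernel-verified Lean document; each statement's English description precedes it below -/
import Mathlib

section
/- Let A be a family of functions A_n : [0,∞)^n → [0,∞), one for each integer n ≥ 1, such that: (i) each A_n is continuous in each coordinate; (ii) each A_n is strictly increasing in each coordinate; (iii) A is associative, i.e. A_1(x) = x for all x ≥ 0 and A_n(x_1,…,x_n) = A_2(A_i(x_1,…,x_i), A_{n−i}(x_{i+1},…,x_n)) for all n ≥ 2 and 1 ≤ i < n; and (iv) A is loss compatible, i.e. A_n(0,…,0) = 0 for all n. Then there exists a continuous, strictly increasing function u : [0,∞) → [0,∞) with u(0) = 0 such that for every n ≥ 1 and all x_1,…,x_n ∈ [0,∞), u(A_n(x_1,…,x_n)) = u(x_1) + u(x_2) + ⋯ + u(x_n). -/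
/-!
The binary law `x ⋆ y = A₂(x, y)` is associative on `[0, ∞)`, has `0` as neutral element, and
is continuous and strictly increasing in each variable, hence jointly continuous. By the
intermediate value theorem every element has a `⋆`-square root, so there are `⋆`-roots `w_k`
of `1` of order `2 ^ k`. Counting how many copies of `w_k` fit below `x` and dividing by `2 ^ k`
gives in the limit a generator `u` with `u (x ⋆ y) = u x + u y` and `u 1 = 1`. It is strictly
increasing since powers of any `a > 0` are unbounded, and continuous since `u (w_k) = 2⁻ᵏ`
while `x < x ⋆ w_k`. Associativity of `A` then turns `u ∘ A_n` into `∑ u (x i)`.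
-/

open scoped NNReal
open Filter Set Topology Function

theorem continuous_uncurry_of_monotone {α β γ : Type*}
    [TopologicalSpace α] [LinearOrder α] [OrderTopology α]
    [TopologicalSpace β] [LinearOrder β] [OrderTopology β]
    [TopologicalSpace γ] [LinearOrder γ] [OrderTopology γ] {f : α → β → γ}
    (hf₁ : ∀ b, Continuous (f · b)) (hf₂ : ∀ a, Continuous (f a))
    (hm₁ : ∀ b, Monotone (f · b)) (hm₂ : ∀ a, Monotone (f a)) :
    Continuous (uncurry f) := by
  refine continuous_iff_continuousAt.2 fun ⟨a, b⟩ =>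
    tendsto_order.2 ⟨fun c hc => ?_, fun c hc => ?_⟩
  · obtain ⟨l, _, ha, hl, hls⟩ := exists_Icc_mem_subset_of_mem_nhds
      ((hf₁ b).continuousAt.eventually (lt_mem_nhds hc))
    obtain ⟨l', _, hb, hl', hls'⟩ := exists_Icc_mem_subset_of_mem_nhds
      ((hf₂ l).continuousAt.eventually (lt_mem_nhds (hls ⟨le_rfl, ha.1.trans ha.2⟩)))
    filter_upwards [prod_mem_nhds hl hl'] with p hp
    exact (hls' ⟨le_rfl, hb.1.trans hb.2⟩).trans_le ((hm₂ l hp.2.1).trans (hm₁ _ hp.1.1))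
  · obtain ⟨_, r, ha, hr, hrs⟩ := exists_Icc_mem_subset_of_mem_nhds
      ((hf₁ b).continuousAt.eventually (gt_mem_nhds hc))
    obtain ⟨_, r', hb, hr', hrs'⟩ := exists_Icc_mem_subset_of_mem_nhds
      ((hf₂ r).continuousAt.eventually (gt_mem_nhds (hrs ⟨ha.1.trans ha.2, le_rfl⟩)))
    filter_upwards [prod_mem_nhds hr hr'] with p hp
    exact ((hm₁ _ hp.1.2).trans (hm₂ r hp.2.2)).trans_lt (hrs' ⟨hb.1.trans hb.2, le_rfl⟩)

theorem tendsto_div_two_pow_iSup {N : ℕ → ℕ} (hN : ∀ k, N k = N (k + 1) / 2) :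
    Tendsto (fun k => (N k : ℝ) / 2 ^ k) atTop (𝓝 (⨆ k, (N k : ℝ) / 2 ^ k)) := by
  have hmono : Monotone (fun k => (N k : ℝ) / 2 ^ k) := monotone_nat_of_le_succ fun k => by
    have h2 : 2 * N k ≤ N (k + 1) := by
      rw [hN k]
      exact Nat.mul_div_le _ _
    rw [div_le_div_iff₀ (by positivity) (by positivity), pow_succ, ← mul_assoc, mul_right_comm]
    gcongr
    exact_mod_cast h2.trans_eq' (mul_comm _ _)
  have hN0 : ∀ k, N 0 = N k / 2 ^ k := fun k => by
    induction k with
    | zero => simp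
    | succ k ih => rw [ih, hN k, Nat.div_div_eq_div_mul, pow_succ']
  refine tendsto_atTop_ciSup hmono ⟨N 0 + 1, forall_mem_range.2 fun k => ?_⟩
  rw [div_le_iff₀ (by positivity)]
  have := Nat.lt_mul_div_succ (N k) (pow_pos two_pos k)
  rw [← hN0] at this
  exact_mod_cast (this.trans_eq (mul_comm _ _)).le

structure IsContinuousStrictMonoidLaw (F : ℝ≥0 → ℝ≥0 → ℝ≥0) : Prop where
  continuous : Continuous (uncurry F)
  strictMono_left : ∀ b, StrictMono (F · b)
  strictMono_right : ∀ a, StrictMono (F a)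
  assoc : ∀ a b c, F (F a b) c = F a (F b c)
  zero_left : ∀ a, F 0 a = a
  zero_right : ∀ a, F a 0 = a

def fpow (F : ℝ≥0 → ℝ≥0 → ℝ≥0) (a : ℝ≥0) : ℕ → ℝ≥0
  | 0 => 0
  | n + 1 => F (fpow F a n) a

@[simp] theorem fpow_zero (F : ℝ≥0 → ℝ≥0 → ℝ≥0) (a : ℝ≥0) : fpow F a 0 = 0 := rfl

theorem fpow_succ (F : ℝ≥0 → ℝ≥0 → ℝ≥0) (a : ℝ≥0) (n : ℕ) :
    fpow F a (n + 1) = F (fpow F a n) a := rfl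

/-- For `a = 0` the set is unbounded and this is the junk value `0`. -/
noncomputable def fpowFloor (F : ℝ≥0 → ℝ≥0 → ℝ≥0) (a x : ℝ≥0) : ℕ :=
  sSup {m | fpow F a m ≤ x}

namespace IsContinuousStrictMonoidLaw

variable {F : ℝ≥0 → ℝ≥0 → ℝ≥0} (h : IsContinuousStrictMonoidLaw F)

include h

theorem continuous_left (b : ℝ≥0) : Continuous (F · b) :=
  h.continuous.comp (continuous_id.prodMk continuous_const)

theorem continuous_right (a : ℝ≥0) : Continuous (F a) :=
  h.continuous.comp (continuous_const.prodMk continuous_id)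

theorem le_left (a b : ℝ≥0) : a ≤ F a b := by
  simpa only [h.zero_right] using (h.strictMono_right a).monotone zero_le

theorem lt_left (a : ℝ≥0) {b : ℝ≥0} (hb : 0 < b) : a < F a b := by
  simpa only [h.zero_right] using h.strictMono_right a hb

theorem exists_op_eq_of_le {x y : ℝ≥0} (hxy : x ≤ y) : ∃ t, F x t = y := by
  have hy : y ∈ Icc (F x 0) (F x y) := ⟨(h.zero_right x).trans_le hxy, ?_⟩
  · obtain ⟨t, -, ht⟩ := intermediate_value_Icc zero_le (h.continuous_right x).continuousOn hy
    exact ⟨t, ht⟩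
  · simpa only [h.zero_left] using (h.strictMono_left y).monotone zero_le

theorem exists_op_self_eq (y : ℝ≥0) : ∃ s, F s s = y := by
  have hy : y ∈ Icc (F 0 0) (F y y) := ⟨(h.zero_left 0).trans_le zero_le, h.le_left y y⟩
  obtain ⟨s, -, hs⟩ := intermediate_value_Icc zero_le
    (h.continuous.comp (continuous_id.prodMk continuous_id)).continuousOn hy
  exact ⟨s, hs⟩

theorem fpow_one (a : ℝ≥0) : fpow F a 1 = a := h.zero_left a

theorem fpow_add (a : ℝ≥0) (m n : ℕ) : fpow F a (m + n) = F (fpow F a m) (fpow F a n) := by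
  induction n with
  | zero => exact (h.zero_right _).symm
  | succ n ih => rw [← add_assoc, fpow_succ, ih, fpow_succ, h.assoc]

theorem fpow_mul (a : ℝ≥0) (m n : ℕ) : fpow F a (m * n) = fpow F (fpow F a n) m := by
  induction m with
  | zero => simp only [zero_mul, fpow_zero]
  | succ m ih => rw [Nat.succ_mul, h.fpow_add, ih, fpow_succ]

theorem fpow_strictMono {a : ℝ≥0} (ha : 0 < a) : StrictMono (fpow F a) :=
  strictMono_nat_of_lt_succ fun _ => h.lt_left _ ha

/-- The Archimedean property: a limit `L` of the powers of `a` would satisfy `F L a = L`. -/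
theorem exists_lt_fpow {a : ℝ≥0} (ha : 0 < a) (x : ℝ≥0) : ∃ n, x < fpow F a n := by
  by_contra! hbdd
  have hL := tendsto_atTop_ciSup (h.fpow_strictMono ha).monotone ⟨x, forall_mem_range.2 hbdd⟩
  have hFL := ((h.continuous_left a).tendsto _).comp hL
  exact (h.lt_left _ ha).ne' (tendsto_nhds_unique hFL (hL.comp (tendsto_add_atTop_nat 1)))

theorem le_fpowFloor_iff {a : ℝ≥0} (ha : 0 < a) {x : ℝ≥0} {m : ℕ} :
    m ≤ fpowFloor F a x ↔ fpow F a m ≤ x := by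
  obtain ⟨n, hn⟩ := h.exists_lt_fpow ha x
  have hbdd : BddAbove {m | fpow F a m ≤ x} :=
    ⟨n, fun m hm => ((h.fpow_strictMono ha).lt_iff_lt.1 (hm.trans_lt hn)).le⟩
  refine ⟨fun hm => ((h.fpow_strictMono ha).monotone hm).trans ?_, fun hm => le_csSup hbdd hm⟩
  exact Nat.sSup_mem ⟨0, show fpow F a 0 ≤ x from zero_le⟩ hbdd

theorem fpowFloor_lt_iff {a : ℝ≥0} (ha : 0 < a) {x : ℝ≥0} {m : ℕ} :
    fpowFloor F a x < m ↔ x < fpow F a m := by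
  simpa only [not_le] using (h.le_fpowFloor_iff ha).not

theorem fpowFloor_mono {a : ℝ≥0} (ha : 0 < a) : Monotone (fpowFloor F a) := fun _ _ hxy =>
  (h.le_fpowFloor_iff ha).2 (((h.le_fpowFloor_iff ha).1 le_rfl).trans hxy)

theorem fpowFloor_fpow {a : ℝ≥0} (ha : 0 < a) (n : ℕ) : fpowFloor F a (fpow F a n) = n :=
  le_antisymm ((h.fpow_strictMono ha).le_iff_le.1 ((h.le_fpowFloor_iff ha).1 le_rfl))
    ((h.le_fpowFloor_iff ha).2 le_rfl)

theorem add_fpowFloor_le {a : ℝ≥0} (ha : 0 < a) (x y : ℝ≥0) :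
    fpowFloor F a x + fpowFloor F a y ≤ fpowFloor F a (F x y) := by
  rw [h.le_fpowFloor_iff ha, h.fpow_add]
  exact ((h.strictMono_left _).monotone ((h.le_fpowFloor_iff ha).1 le_rfl)).trans
    ((h.strictMono_right x).monotone ((h.le_fpowFloor_iff ha).1 le_rfl))

theorem fpowFloor_le_add {a : ℝ≥0} (ha : 0 < a) (x y : ℝ≥0) :
    fpowFloor F a (F x y) ≤ fpowFloor F a x + fpowFloor F a y + 1 := by
  rw [← Nat.lt_add_one_iff, h.fpowFloor_lt_iff ha, show fpowFloor F a x + fpowFloor F a y + 1 + 1 =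
    (fpowFloor F a x + 1) + (fpowFloor F a y + 1) by ring, h.fpow_add]
  exact (h.strictMono_left y ((h.fpowFloor_lt_iff ha).1 (Nat.lt_succ_self _))).trans
    (h.strictMono_right _ ((h.fpowFloor_lt_iff ha).1 (Nat.lt_succ_self _)))

theorem fpowFloor_fpow_left {a : ℝ≥0} (ha : 0 < a) {n : ℕ} (hn : 0 < n) (x : ℝ≥0) :
    fpowFloor F (fpow F a n) x = fpowFloor F a x / n := by
  refine eq_of_forall_le_iff fun m => ?_
  rw [h.le_fpowFloor_iff (h.fpow_strictMono ha hn), ← h.fpow_mul, ← h.le_fpowFloor_iff ha,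
    Nat.le_div_iff_mul_le hn]

noncomputable def dyadicRoot : ℕ → ℝ≥0
  | 0 => 1
  | k + 1 => (h.exists_op_self_eq (dyadicRoot k)).choose

theorem fpow_dyadicRoot_succ_two (k : ℕ) : fpow F (h.dyadicRoot (k + 1)) 2 = h.dyadicRoot k := by
  rw [fpow_succ, h.fpow_one]
  exact (h.exists_op_self_eq _).choose_spec

theorem dyadicRoot_pos (k : ℕ) : 0 < h.dyadicRoot k := by
  induction k with
  | zero => exact one_pos
  | succ k ih =>
    refine pos_of_ne_zero fun h0 => ih.ne ?_
    rw [← h.fpow_dyadicRoot_succ_two, h0, fpow_succ, h.fpow_one, h.zero_left]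

theorem fpow_dyadicRoot_two_pow (k : ℕ) : fpow F (h.dyadicRoot k) (2 ^ k) = 1 := by
  induction k with
  | zero => exact h.fpow_one 1
  | succ k ih => rw [pow_succ, h.fpow_mul, h.fpow_dyadicRoot_succ_two, ih]

theorem fpowFloor_dyadicRoot_eq_div (x : ℝ≥0) (k : ℕ) :
    fpowFloor F (h.dyadicRoot k) x = fpowFloor F (h.dyadicRoot (k + 1)) x / 2 := by
  rw [← h.fpowFloor_fpow_left (h.dyadicRoot_pos _) two_pos, h.fpow_dyadicRoot_succ_two]

noncomputable def addGen (x : ℝ≥0) : ℝ :=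
  ⨆ k, (fpowFloor F (h.dyadicRoot k) x : ℝ) / 2 ^ k

theorem tendsto_addGen (x : ℝ≥0) :
    Tendsto (fun k => (fpowFloor F (h.dyadicRoot k) x : ℝ) / 2 ^ k) atTop (𝓝 (h.addGen x)) :=
  tendsto_div_two_pow_iSup (h.fpowFloor_dyadicRoot_eq_div x)

theorem addGen_op (x y : ℝ≥0) : h.addGen (F x y) = h.addGen x + h.addGen y := by
  have hsum := (h.tendsto_addGen x).add (h.tendsto_addGen y)
  have hsum' : Tendsto (fun k => (fpowFloor F (h.dyadicRoot k) x : ℝ) / 2 ^ k +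
      (fpowFloor F (h.dyadicRoot k) y : ℝ) / 2 ^ k + (1 / 2) ^ k) atTop
      (𝓝 (h.addGen x + h.addGen y)) := by
    simpa using hsum.add (tendsto_pow_atTop_nhds_zero_of_lt_one (r := (1 / 2 : ℝ)) (by norm_num)
      (by norm_num))
  refine tendsto_nhds_unique (h.tendsto_addGen _)
    (tendsto_of_tendsto_of_tendsto_of_le_of_le hsum hsum' (fun k => ?_) (fun k => ?_))
  · dsimp only
    rw [← add_div, div_le_div_iff_of_pos_right (by positivity)]
    exact_mod_cast h.add_fpowFloor_le (h.dyadicRoot_pos k) x y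
  · dsimp only
    rw [one_div_pow, ← add_div, ← add_div, div_le_div_iff_of_pos_right (by positivity)]
    exact_mod_cast h.fpowFloor_le_add (h.dyadicRoot_pos k) x y

theorem addGen_mono : Monotone h.addGen := fun x y hxy =>
  le_of_tendsto_of_tendsto' (h.tendsto_addGen x) (h.tendsto_addGen y) fun k => by
    gcongr
    exact h.fpowFloor_mono (h.dyadicRoot_pos k) hxy

theorem addGen_zero : h.addGen 0 = 0 := by
  simpa [h.zero_left] using h.addGen_op 0 0

theorem addGen_nonneg (x : ℝ≥0) : 0 ≤ h.addGen x :=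
  h.addGen_zero ▸ h.addGen_mono zero_le

theorem addGen_one : h.addGen 1 = 1 := by
  refine tendsto_nhds_unique (h.tendsto_addGen 1) (tendsto_const_nhds.congr fun k => ?_)
  rw [← h.fpow_dyadicRoot_two_pow k, h.fpowFloor_fpow (h.dyadicRoot_pos k)]
  push_cast
  exact (div_self (by positivity)).symm

theorem addGen_fpow (a : ℝ≥0) (n : ℕ) : h.addGen (fpow F a n) = n * h.addGen a := by
  induction n with
  | zero => simp only [fpow_zero, h.addGen_zero, Nat.cast_zero, zero_mul]
  | succ n ih => rw [fpow_succ, h.addGen_op, ih]; push_cast; ring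

theorem addGen_dyadicRoot (k : ℕ) : h.addGen (h.dyadicRoot k) = (1 / 2) ^ k := by
  have := h.addGen_fpow (h.dyadicRoot k) (2 ^ k)
  rw [h.fpow_dyadicRoot_two_pow, h.addGen_one] at this
  rw [one_div_pow, eq_div_iff (by positivity)]
  push_cast at this
  linarith

/-- Some power of `a` exceeds `1`, and `addGen 1 = 1`. -/
theorem addGen_pos {a : ℝ≥0} (ha : 0 < a) : 0 < h.addGen a := by
  obtain ⟨n, hn⟩ := h.exists_lt_fpow ha 1
  have h1 : 1 ≤ n * h.addGen a := by
    rw [← h.addGen_fpow, ← h.addGen_one]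
    exact h.addGen_mono hn.le
  exact pos_of_mul_pos_right (one_pos.trans_le h1) n.cast_nonneg

theorem addGen_strictMono : StrictMono h.addGen := fun x y hxy => by
  obtain ⟨t, rfl⟩ := h.exists_op_eq_of_le hxy.le
  have ht : 0 < t := pos_of_ne_zero fun ht => by simp [ht, h.zero_right] at hxy
  linarith [h.addGen_op x t, h.addGen_pos ht]

theorem continuous_addGen : Continuous h.addGen := by
  refine continuous_iff_continuousAt.2 fun x => tendsto_order.2 ⟨fun c hc => ?_, fun c hc => ?_⟩
  · obtain ⟨k, hk⟩ := exists_pow_lt_of_lt_one (sub_pos.2 hc) (by norm_num : (1 / 2 : ℝ) < 1)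
    have hx := h.lt_left x (h.dyadicRoot_pos k)
    filter_upwards [((h.continuous_left _).tendsto x).eventually_const_lt hx] with y hy
    linarith [h.addGen_mono hy.le, h.addGen_op y (h.dyadicRoot k), h.addGen_dyadicRoot k]
  · obtain ⟨k, hk⟩ := exists_pow_lt_of_lt_one (sub_pos.2 hc) (by norm_num : (1 / 2 : ℝ) < 1)
    filter_upwards [eventually_lt_nhds (h.lt_left x (h.dyadicRoot_pos k))] with y hy
    linarith [h.addGen_mono hy.le, h.addGen_op x (h.dyadicRoot k), h.addGen_dyadicRoot k]

end IsContinuousStrictMonoidLaw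

structure IsLossAggregation (A : (n : ℕ) → (Fin n → ℝ) → ℝ) : Prop where
  nonneg : ∀ (n : ℕ) (x : Fin n → ℝ), (∀ i, 0 ≤ x i) → 0 ≤ A n x
  continuousOn : ∀ (n : ℕ) (x : Fin n → ℝ), (∀ i, 0 ≤ x i) → ∀ i : Fin n,
    ContinuousOn (fun y => A n (update x i y)) (Ici 0)
  strictMonoOn : ∀ (n : ℕ) (x : Fin n → ℝ), (∀ i, 0 ≤ x i) → ∀ i : Fin n,
    StrictMonoOn (fun y => A n (update x i y)) (Ici 0)
  one : ∀ x : ℝ, 0 ≤ x → A 1 (fun _ => x) = x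
  assoc : ∀ (m k : ℕ), 1 ≤ m → 1 ≤ k → ∀ x : Fin (m + k) → ℝ, (∀ i, 0 ≤ x i) →
    A (m + k) x = A 2 ![A m (fun j => x (Fin.castAdd k j)), A k (fun j => x (Fin.natAdd m j))]
  zero : ∀ n : ℕ, 1 ≤ n → A n (fun _ => 0) = 0

noncomputable def binaryLaw (A : (n : ℕ) → (Fin n → ℝ) → ℝ) (p q : ℝ≥0) : ℝ≥0 :=
  (A 2 ![p, q]).toNNReal

namespace IsLossAggregation

variable {A : (n : ℕ) → (Fin n → ℝ) → ℝ} (hA : IsLossAggregation A)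

include hA

theorem nonneg_two {a b : ℝ} (ha : 0 ≤ a) (hb : 0 ≤ b) : 0 ≤ A 2 ![a, b] :=
  hA.nonneg 2 _ (Fin.forall_fin_two.2 ⟨ha, hb⟩)

theorem strictMonoOn_two_left {b : ℝ} (hb : 0 ≤ b) :
    StrictMonoOn (fun y => A 2 ![y, b]) (Ici 0) := by
  have hupd (y : ℝ) : update ![0, b] 0 y = ![y, b] := by ext i; fin_cases i <;> simp
  simpa only [hupd] using hA.strictMonoOn 2 ![0, b] (Fin.forall_fin_two.2 ⟨le_rfl, hb⟩) 0

theorem strictMonoOn_two_right {a : ℝ} (ha : 0 ≤ a) :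
    StrictMonoOn (fun y => A 2 ![a, y]) (Ici 0) := by
  have hupd (y : ℝ) : update ![a, 0] 1 y = ![a, y] := by ext i; fin_cases i <;> simp
  simpa only [hupd] using hA.strictMonoOn 2 ![a, 0] (Fin.forall_fin_two.2 ⟨ha, le_rfl⟩) 1

theorem continuousOn_two_left {b : ℝ} (hb : 0 ≤ b) :
    ContinuousOn (fun y => A 2 ![y, b]) (Ici 0) := by
  have hupd (y : ℝ) : update ![0, b] 0 y = ![y, b] := by ext i; fin_cases i <;> simp
  simpa only [hupd] using hA.continuousOn 2 ![0, b] (Fin.forall_fin_two.2 ⟨le_rfl, hb⟩) 0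

theorem continuousOn_two_right {a : ℝ} (ha : 0 ≤ a) :
    ContinuousOn (fun y => A 2 ![a, y]) (Ici 0) := by
  have hupd (y : ℝ) : update ![a, 0] 1 y = ![a, y] := by ext i; fin_cases i <;> simp
  simpa only [hupd] using hA.continuousOn 2 ![a, 0] (Fin.forall_fin_two.2 ⟨ha, le_rfl⟩) 1

theorem three_eq_left {a b c : ℝ} (ha : 0 ≤ a) (hb : 0 ≤ b) (hc : 0 ≤ c) :
    A 3 ![a, b, c] = A 2 ![A 2 ![a, b], c] := by
  have h := hA.assoc 2 1 one_le_two le_rfl ![a, b, c] (by simp [Fin.forall_fin_succ, ha, hb, hc])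
  have hab : (fun j : Fin 2 => ![a, b, c] (Fin.castAdd 1 j)) = ![a, b] := by
    ext j; fin_cases j <;> rfl
  have hc' : (fun j : Fin 1 => ![a, b, c] (Fin.natAdd 2 j)) = fun _ => c := by
    ext j; fin_cases j; rfl
  rwa [hab, hc', hA.one c hc] at h

theorem three_eq_right {a b c : ℝ} (ha : 0 ≤ a) (hb : 0 ≤ b) (hc : 0 ≤ c) :
    A 3 ![a, b, c] = A 2 ![a, A 2 ![b, c]] := by
  have h := hA.assoc 1 2 le_rfl one_le_two ![a, b, c] (by simp [Fin.forall_fin_succ, ha, hb, hc])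
  have ha' : (fun j : Fin 1 => ![a, b, c] (Fin.castAdd 2 j)) = fun _ => a := by
    ext j; fin_cases j; rfl
  have hbc : (fun j : Fin 2 => ![a, b, c] (Fin.natAdd 1 j)) = ![b, c] := by
    ext j; fin_cases j <;> rfl
  rwa [ha', hbc, hA.one a ha] at h

theorem two_assoc {a b c : ℝ} (ha : 0 ≤ a) (hb : 0 ≤ b) (hc : 0 ≤ c) :
    A 2 ![A 2 ![a, b], c] = A 2 ![a, A 2 ![b, c]] := by
  rw [← hA.three_eq_left ha hb hc, hA.three_eq_right ha hb hc]

theorem two_zero_zero : A 2 ![0, 0] = 0 := by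
  have hzero : (![0, 0] : Fin 2 → ℝ) = fun _ => 0 := by ext i; fin_cases i <;> rfl
  rw [hzero, hA.zero 2 one_le_two]

/-- Both bracketings of `A₃(t, 0, 0)` give `A₂(A₂(t, 0), 0) = A₂(t, 0)`; cancel `A₂(·, 0)`. -/
theorem two_zero_right {t : ℝ} (ht : 0 ≤ t) : A 2 ![t, 0] = t := by
  refine (hA.strictMonoOn_two_left le_rfl).injOn (hA.nonneg_two ht le_rfl) ht ?_
  rw [hA.two_assoc ht le_rfl le_rfl, hA.two_zero_zero]

theorem two_zero_left {t : ℝ} (ht : 0 ≤ t) : A 2 ![0, t] = t := by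
  refine (hA.strictMonoOn_two_right le_rfl).injOn (hA.nonneg_two le_rfl ht) ht ?_
  rw [← hA.two_assoc le_rfl le_rfl ht, hA.two_zero_zero]

theorem coe_binaryLaw (p q : ℝ≥0) : (binaryLaw A p q : ℝ) = A 2 ![p, q] :=
  Real.coe_toNNReal _ (hA.nonneg_two p.2 q.2)

theorem isContinuousStrictMonoidLaw : IsContinuousStrictMonoidLaw (binaryLaw A) := by
  have strictMono_left (q : ℝ≥0) : StrictMono (binaryLaw A · q) := fun p p' hp => by
    rw [← NNReal.coe_lt_coe, hA.coe_binaryLaw, hA.coe_binaryLaw]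
    exact hA.strictMonoOn_two_left q.2 p.2 p'.2 (NNReal.coe_lt_coe.2 hp)
  have strictMono_right (p : ℝ≥0) : StrictMono (binaryLaw A p) := fun q q' hq => by
    rw [← NNReal.coe_lt_coe, hA.coe_binaryLaw, hA.coe_binaryLaw]
    exact hA.strictMonoOn_two_right p.2 q.2 q'.2 (NNReal.coe_lt_coe.2 hq)
  refine ⟨continuous_uncurry_of_monotone (fun q => ?_) (fun p => ?_)
    (fun q => (strictMono_left q).monotone) (fun p => (strictMono_right p).monotone),
    strictMono_left, strictMono_right, fun p q r => ?_, fun p => ?_, fun p => ?_⟩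
  · exact continuous_real_toNNReal.comp
      ((hA.continuousOn_two_left q.2).comp_continuous continuous_subtype_val fun p => p.2)
  · exact continuous_real_toNNReal.comp
      ((hA.continuousOn_two_right p.2).comp_continuous continuous_subtype_val fun q => q.2)
  · simpa only [← NNReal.coe_inj, hA.coe_binaryLaw] using
      hA.two_assoc p.coe_nonneg q.coe_nonneg r.coe_nonneg
  · simpa only [← NNReal.coe_inj, hA.coe_binaryLaw, NNReal.coe_zero] using
      hA.two_zero_left p.coe_nonneg
  · simpa only [← NNReal.coe_inj, hA.coe_binaryLaw, NNReal.coe_zero] using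
      hA.two_zero_right p.coe_nonneg

theorem map_eq_sum {g : ℝ → ℝ} (hg : ∀ a b, 0 ≤ a → 0 ≤ b → g (A 2 ![a, b]) = g a + g b)
    {n : ℕ} (hn : 1 ≤ n) (x : Fin n → ℝ) (hx : ∀ i, 0 ≤ x i) : g (A n x) = ∑ i, g (x i) := by
  induction n, hn using Nat.le_induction with
  | base =>
    rw [Fin.sum_univ_one, ← hA.one _ (hx 0)]
    congr 2
    ext i
    rw [Subsingleton.elim i 0]
  | succ n hn ih =>
    have hlast : (fun j : Fin 1 => x (Fin.natAdd n j)) = fun _ => x (Fin.last n) := by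
      ext j; fin_cases j; rfl
    rw [hA.assoc n 1 hn le_rfl x hx, hlast, hA.one _ (hx _), hg _ _ (hA.nonneg n _ fun _ => hx _)
      (hx _), ih _ fun _ => hx _, Fin.sum_univ_castSucc]
    rfl

end IsLossAggregation

/-- **Axiomatical characterization of loss aggregations (quasi-sum part).**
A family `A n : [0,∞)ⁿ → [0,∞)` that is continuous and strictly increasing in each
coordinate, associative, and loss compatible is a quasi-sum: there is a continuous,
strictly increasing `u : [0,∞) → [0,∞)` with `u 0 = 0` such that
`u (A n (x₁,…,xₙ)) = u x₁ + ⋯ + u xₙ`. -/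
theorem stmt_0
    (A : (n : ℕ) → (Fin n → ℝ) → ℝ)
    -- A maps [0,∞)^n into [0,∞)
    (hA_nonneg : ∀ (n : ℕ) (x : Fin n → ℝ), (∀ i, 0 ≤ x i) → 0 ≤ A n x)
    -- (A1) continuity in each coordinate
    (hA_cont : ∀ (n : ℕ) (x : Fin n → ℝ), (∀ i, 0 ≤ x i) → ∀ i : Fin n,
      ContinuousOn (fun y => A n (Function.update x i y)) (Set.Ici (0 : ℝ)))
    -- (A2) strictly increasing in each coordinate
    (hA_mono : ∀ (n : ℕ) (x : Fin n → ℝ), (∀ i, 0 ≤ x i) → ∀ i : Fin n,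
      StrictMonoOn (fun y => A n (Function.update x i y)) (Set.Ici (0 : ℝ)))
    -- (A3) associativity: A₁ is the identity …
    (hA_one : ∀ x : ℝ, 0 ≤ x → A 1 (fun _ => x) = x)
    -- … and A_{m+k}(x) = A₂(A_m(x₁,…,x_m), A_k(x_{m+1},…,x_{m+k}))
    (hA_assoc : ∀ (m k : ℕ), 1 ≤ m → 1 ≤ k → ∀ x : Fin (m + k) → ℝ, (∀ i, 0 ≤ x i) →
      A (m + k) x =
        A 2 ![A m (fun j => x (Fin.castAdd k j)), A k (fun j => x (Fin.natAdd m j))])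
    -- (A4) loss compatibility: A_n(0,…,0) = 0
    (hA_zero : ∀ n : ℕ, 1 ≤ n → A n (fun _ => 0) = 0) :
    ∃ u : ℝ → ℝ,
      ContinuousOn u (Set.Ici (0 : ℝ)) ∧
      StrictMonoOn u (Set.Ici (0 : ℝ)) ∧
      u 0 = 0 ∧
      (∀ x : ℝ, 0 ≤ x → 0 ≤ u x) ∧
      (∀ (n : ℕ), 1 ≤ n → ∀ x : Fin n → ℝ, (∀ i, 0 ≤ x i) →
        u (A n x) = ∑ i, u (x i)) := by
  have hA : IsLossAggregation A := ⟨hA_nonneg, hA_cont, hA_mono, hA_one, hA_assoc, hA_zero⟩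
  have h := hA.isContinuousStrictMonoidLaw
  set u : ℝ → ℝ := fun x => h.addGen x.toNNReal
  have hu (a b : ℝ) (ha : 0 ≤ a) (hb : 0 ≤ b) : u (A 2 ![a, b]) = u a + u b := by
    rw [← h.addGen_op, binaryLaw, Real.coe_toNNReal _ ha, Real.coe_toNNReal _ hb]
  refine ⟨u, (h.continuous_addGen.comp continuous_real_toNNReal).continuousOn,
    fun x hx y _ hxy => h.addGen_strictMono ((Real.toNNReal_lt_toNNReal_iff_of_nonneg hx).2 hxy),
    by simp [u, h.addGen_zero], fun x _ => h.addGen_nonneg _,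
    fun n hn x hx => hA.map_eq_sum hu hn x hx⟩
end

section
/- Let A be a family of functions A_n : [0,∞)^n → [0,∞) (n ≥ 1) that is continuous, strictly increasing, associative and loss compatible, and additionally positively homogeneous: for every c ∈ [0,∞), every n ≥ 1 and all x_1,…,x_n ∈ [0,∞), A_n(c·x_1,…,c·x_n) = c·A_n(x_1,…,x_n). Then there exists k ∈ (0,∞) such that for every n ≥ 1 and all x_1,…,x_n ∈ [0,∞), A_n(x_1,…,x_n) = (x_1^k + x_2^k + ⋯ + x_n^k)^{1/k}. -/
-- multiplicative increasing sequence is a power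
theorem aux_pow_law (a : ℕ → ℝ)
    (hpos : ∀ n, 1 ≤ n → 0 < a n)
    (ha1 : a 1 = 1)
    (hmul : ∀ m n, 1 ≤ m → 1 ≤ n → a (m * n) = a m * a n)
    (hmono : ∀ m n, 1 ≤ m → m ≤ n → a m ≤ a n)
    (h2 : 1 < a 2) :
    ∀ n, 1 ≤ n → a n = (n : ℝ) ^ (Real.log (a 2) / Real.log 2) := by
  have apow : ∀ n j, 1 ≤ n → a (n ^ j) = (a n) ^ j := by
    intro n j hn
    induction j with
    | zero => simpa using ha1
    | succ j ih =>
      have h1 : 1 ≤ n ^ j := Nat.one_le_pow _ _ hn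
      rw [pow_succ, hmul _ _ h1 hn, ih, pow_succ]
  intro n hn
  rcases eq_or_lt_of_le hn with h1 | h2n
  · rw [← h1, ha1]; simp
  -- now 2 ≤ n
  have hn2 : 2 ≤ n := h2n
  set L2 := Real.log (a 2) with hL2def
  set l2 := Real.log 2 with hl2def
  have hL2 : 0 < L2 := Real.log_pos h2
  have hl2 : 0 < l2 := Real.log_pos (by norm_num)
  have han : 1 < a n := lt_of_lt_of_le h2 (hmono 2 n (by norm_num) hn2)
  set Ln := Real.log (a n) with hLndef
  set ln := Real.log (n : ℝ) with hlndef
  have hLn : 0 < Ln := Real.log_pos han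
  have hln : 0 < ln := Real.log_pos (by exact_mod_cast hn2)
  have key : Ln / L2 = ln / l2 := by
    have hbound : ∀ m : ℕ, 1 ≤ m → |Ln / L2 - ln / l2| ≤ 1 / m := by
      intro m hm
      set t := Nat.floor ((m * ln) / l2) with htdef
      have hfl1 : (t : ℝ) * l2 ≤ m * ln := by
        have := Nat.floor_le (by positivity : (0:ℝ) ≤ (m * ln) / l2)
        calc (t:ℝ) * l2 ≤ ((m * ln) / l2) * l2 := by nlinarith
        _ = m * ln := by field_simp
      have hfl2 : m * ln < ((t:ℝ) + 1) * l2 := by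
        have := Nat.lt_floor_add_one ((m * ln) / l2)
        calc (m:ℝ) * ln = ((m * ln) / l2) * l2 := by field_simp
        _ < ((t:ℝ) + 1) * l2 := by nlinarith
      -- 2^t ≤ n^m ≤ 2^(t+1) as naturals
      have hp1 : (2:ℕ) ^ t ≤ n ^ m := by
        have : ((2:ℝ)) ^ t ≤ (n:ℝ) ^ m := by
          rw [← Real.log_le_log_iff (by positivity) (by positivity),
            Real.log_pow, Real.log_pow]
          exact_mod_cast hfl1
        exact_mod_cast this
      have hp2 : n ^ m ≤ 2 ^ (t + 1) := by
        have : ((n:ℝ)) ^ m ≤ (2:ℝ) ^ (t+1) := by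
          rw [← Real.log_le_log_iff (by positivity) (by positivity),
            Real.log_pow, Real.log_pow]
          push_cast
          exact_mod_cast hfl2.le
        exact_mod_cast this
      -- transfer through a
      have ha1' : (a 2) ^ t ≤ (a n) ^ m := by
        rw [← apow 2 t (by norm_num), ← apow n m hn]
        exact hmono _ _ (Nat.one_le_two_pow) hp1
      have ha2' : (a n) ^ m ≤ (a 2) ^ (t + 1) := by
        rw [← apow 2 (t+1) (by norm_num), ← apow n m hn]
        exact hmono _ _ (Nat.one_le_pow _ _ hn) hp2
      have hb1 : (t : ℝ) * L2 ≤ m * Ln := by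
        have := Real.log_le_log (by positivity) ha1'
        rwa [Real.log_pow, Real.log_pow] at this
      have hb2 : (m : ℝ) * Ln ≤ ((t:ℝ) + 1) * L2 := by
        have := Real.log_le_log (by positivity) ha2'
        rwa [Real.log_pow, Real.log_pow, Nat.cast_add, Nat.cast_one] at this
      have hm' : (0:ℝ) < m := by exact_mod_cast hm
      have hu1 : (t:ℝ) ≤ m * Ln / L2 := by rw [le_div_iff₀ hL2]; linarith
      have hu2 : m * Ln / L2 ≤ (t:ℝ) + 1 := by rw [div_le_iff₀ hL2]; linarith
      have hv1 : (t:ℝ) ≤ m * ln / l2 := by rw [le_div_iff₀ hl2]; linarith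
      have hv2 : m * ln / l2 ≤ (t:ℝ) + 1 := by rw [div_le_iff₀ hl2]; linarith
      have habs : |(m:ℝ) * (Ln / L2 - ln / l2)| ≤ 1 := by
        have : (m:ℝ) * (Ln / L2 - ln / l2) = m * Ln / L2 - m * ln / l2 := by ring
        rw [this, abs_le]; constructor <;> linarith
      rw [abs_mul, abs_of_pos hm'] at habs
      rw [le_div_iff₀ hm']
      linarith [habs]
    by_contra hne
    have hd : 0 < |Ln / L2 - ln / l2| := abs_pos.mpr (sub_ne_zero.mpr hne)
    obtain ⟨m, hm⟩ := exists_nat_one_div_lt hd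
    have := hbound (m+1) (by omega)
    push_cast at this hm
    linarith
  have hfin : Ln = (L2 / l2) * ln := by
    field_simp at key ⊢
    linarith [key]
  have hnpos : (0:ℝ) < n := by positivity
  rw [Real.rpow_def_of_pos hnpos, ← Real.exp_log (hpos n hn)]
  congr 1
  rw [show Real.log (a n) = Ln from rfl, hfin]
  ring


/-- **Axiomatical characterization of positively homogeneous loss aggregations.**
A family `A n : [0,∞)ⁿ → [0,∞)` that is continuous and strictly increasing in each
coordinate, associative, loss compatible and positively homogeneous is an
`L_k`-norm aggregation: there is `k ∈ (0,∞)` with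
`A n (x₁,…,xₙ) = (x₁^k + ⋯ + xₙ^k)^(1/k)`. -/
theorem stmt_1
    (A : (n : ℕ) → (Fin n → ℝ) → ℝ)
    -- A maps [0,∞)^n into [0,∞)
    (hA_nonneg : ∀ (n : ℕ) (x : Fin n → ℝ), (∀ i, 0 ≤ x i) → 0 ≤ A n x)
    -- (A1) continuity in each coordinate
    (hA_cont : ∀ (n : ℕ) (x : Fin n → ℝ), (∀ i, 0 ≤ x i) → ∀ i : Fin n,
      ContinuousOn (fun y => A n (Function.update x i y)) (Set.Ici (0 : ℝ)))
    -- (A2) strictly increasing in each coordinate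
    (hA_mono : ∀ (n : ℕ) (x : Fin n → ℝ), (∀ i, 0 ≤ x i) → ∀ i : Fin n,
      StrictMonoOn (fun y => A n (Function.update x i y)) (Set.Ici (0 : ℝ)))
    -- (A3) associativity: A₁ is the identity …
    (hA_one : ∀ x : ℝ, 0 ≤ x → A 1 (fun _ => x) = x)
    -- … and A_{m+k}(x) = A₂(A_m(x₁,…,x_m), A_k(x_{m+1},…,x_{m+k}))
    (hA_assoc : ∀ (m k : ℕ), 1 ≤ m → 1 ≤ k → ∀ x : Fin (m + k) → ℝ, (∀ i, 0 ≤ x i) →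
      A (m + k) x =
        A 2 ![A m (fun j => x (Fin.castAdd k j)), A k (fun j => x (Fin.natAdd m j))])
    -- (A4) loss compatibility: A_n(0,…,0) = 0
    (hA_zero : ∀ n : ℕ, 1 ≤ n → A n (fun _ => 0) = 0)
    -- positive homogeneity
    (hA_hom : ∀ c : ℝ, 0 ≤ c → ∀ (n : ℕ) (x : Fin n → ℝ), (∀ i, 0 ≤ x i) →
      A n (fun i => c * x i) = c * A n x) :
    ∃ k : ℝ, 0 < k ∧
      ∀ (n : ℕ), 1 ≤ n → ∀ x : Fin n → ℝ, (∀ i, 0 ≤ x i) →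
        A n x = (∑ i, x i ^ k) ^ (1 / k) := by
  -- basic vector facts
  have pair_nonneg : ∀ {x y : ℝ}, 0 ≤ x → 0 ≤ y → ∀ i, 0 ≤ (![x,y]) i := by
    intro x y hx hy i; fin_cases i <;> assumption
  have upd0 : ∀ x y z : ℝ, Function.update ![x,y] 0 z = ![z,y] := by
    intro x y z; ext i; fin_cases i <;> simp [Function.update]
  have upd1 : ∀ x y z : ℝ, Function.update ![x,y] 1 z = ![x,z] := by
    intro x y z; ext i; fin_cases i <;> simp [Function.update]
  have Fnonneg : ∀ {x y : ℝ}, 0 ≤ x → 0 ≤ y → 0 ≤ A 2 ![x,y] := fun hx hy =>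
    hA_nonneg 2 _ (pair_nonneg hx hy)
  have Fmono1 : ∀ y : ℝ, 0 ≤ y → StrictMonoOn (fun x => A 2 ![x,y]) (Set.Ici 0) := by
    intro y hy
    have := hA_mono 2 ![0,y] (pair_nonneg le_rfl hy) 0
    simpa only [upd0] using this
  have Fmono2 : ∀ x : ℝ, 0 ≤ x → StrictMonoOn (fun y => A 2 ![x,y]) (Set.Ici 0) := by
    intro x hx
    have := hA_mono 2 ![x,0] (pair_nonneg hx le_rfl) 1
    simpa only [upd1] using this
  have Fhom : ∀ c x y : ℝ, 0 ≤ c → 0 ≤ x → 0 ≤ y →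
      A 2 ![c*x, c*y] = c * A 2 ![x,y] := by
    intro c x y hc hx hy
    have h := hA_hom c hc 2 ![x,y] (pair_nonneg hx hy)
    have e : (fun i => c * (![x,y]) i) = ![c*x, c*y] := by
      ext i; fin_cases i <;> simp
    rwa [e] at h
  have F00 : A 2 ![(0:ℝ),0] = 0 := by
    have := hA_zero 2 (by norm_num)
    have e : (fun _ : Fin 2 => (0:ℝ)) = ![0,0] := by ext i; fin_cases i <;> rfl
    rwa [e] at this
  -- associativity for three arguments
  have assoc3 : ∀ x y z : ℝ, 0 ≤ x → 0 ≤ y → 0 ≤ z →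
      A 2 ![A 2 ![x,y], z] = A 2 ![x, A 2 ![y,z]] := by
    intro x y z hx hy hz
    have hv : ∀ i, 0 ≤ (![x,y,z]) i := by intro i; fin_cases i <;> assumption
    have h1 := hA_assoc 2 1 (by norm_num) (by norm_num) ![x,y,z] hv
    have h2 := hA_assoc 1 2 (by norm_num) (by norm_num) ![x,y,z] hv
    have e1 : (fun j : Fin 2 => (![x,y,z]) (Fin.castAdd 1 j)) = ![x,y] := by
      ext j; fin_cases j <;> rfl
    have e2 : (fun j : Fin 1 => (![x,y,z]) (Fin.natAdd 2 j)) = fun _ => z := by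
      ext j; fin_cases j <;> rfl
    have e3 : (fun j : Fin 1 => (![x,y,z]) (Fin.castAdd 2 j)) = fun _ => x := by
      ext j; fin_cases j <;> rfl
    have e4 : (fun j : Fin 2 => (![x,y,z]) (Fin.natAdd 1 j)) = ![y,z] := by
      ext j; fin_cases j <;> rfl
    rw [e1, e2, hA_one z hz] at h1
    rw [e3, e4, hA_one x hx] at h2
    rw [← h1, ← h2]
  -- F x 0 = x, F 0 y = y
  have F0y : ∀ y : ℝ, 0 ≤ y → A 2 ![0, y] = y := by
    have hb0 : 0 ≤ A 2 ![(0:ℝ),1] := Fnonneg le_rfl zero_le_one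
    have hbpos : 0 < A 2 ![(0:ℝ),1] := by
      have := Fmono2 0 le_rfl (Set.self_mem_Ici) (Set.mem_Ici.mpr zero_le_one) zero_lt_one
      simpa [F00] using this
    have hb1 : A 2 ![(0:ℝ),1] = 1 := by
      have h := assoc3 0 0 1 le_rfl le_rfl zero_le_one
      rw [F00] at h
      -- h : A 2 ![0,1] = A 2 ![0, A 2 ![0,1]]
      have h2 : A 2 ![(0:ℝ), A 2 ![(0:ℝ),1]] = A 2 ![(0:ℝ),1] * A 2 ![(0:ℝ),1] := by
        have := Fhom (A 2 ![(0:ℝ),1]) 0 1 hb0 le_rfl zero_le_one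
        simpa using this
      rw [h2] at h
      nlinarith
    intro y hy
    have := Fhom y 0 1 hy le_rfl zero_le_one
    simpa [hb1] using this
  have Fx0 : ∀ x : ℝ, 0 ≤ x → A 2 ![x, 0] = x := by
    have hb0 : 0 ≤ A 2 ![(1:ℝ),0] := Fnonneg zero_le_one le_rfl
    have hbpos : 0 < A 2 ![(1:ℝ),0] := by
      have := Fmono1 0 le_rfl (Set.self_mem_Ici) (Set.mem_Ici.mpr zero_le_one) zero_lt_one
      simpa [F00] using this
    have hb1 : A 2 ![(1:ℝ),0] = 1 := by
      have h := assoc3 1 0 0 zero_le_one le_rfl le_rfl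
      rw [F00] at h
      -- h : A 2 ![A 2 ![1,0], 0] = A 2 ![1, 0]
      have h2 : A 2 ![A 2 ![(1:ℝ),0], (0:ℝ)] = A 2 ![(1:ℝ),0] * A 2 ![(1:ℝ),0] := by
        have := Fhom (A 2 ![(1:ℝ),0]) 1 0 hb0 zero_le_one le_rfl
        simpa using this
      rw [h2] at h
      nlinarith
    intro x hx
    have := Fhom x 1 0 hx zero_le_one le_rfl
    simpa [hb1] using this
  -- the sequence a n = A n (1,...,1)
  set a : ℕ → ℝ := fun n => A n (fun _ => 1) with hadef
  have ha1 : a 1 = 1 := hA_one 1 zero_le_one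
  have hanonneg : ∀ n, 0 ≤ a n := fun n => hA_nonneg n _ (fun _ => zero_le_one)
  have haadd : ∀ m k : ℕ, 1 ≤ m → 1 ≤ k → a (m + k) = A 2 ![a m, a k] := by
    intro m k hm hk
    exact hA_assoc m k hm hk (fun _ => 1) (fun _ => zero_le_one)
  have hasucc : ∀ n, 1 ≤ n → a (n + 1) = A 2 ![a n, 1] := by
    intro n hn
    rw [haadd n 1 hn le_rfl, ha1]
  have hastep : ∀ n, 1 ≤ n → a n < a (n + 1) := by
    intro n hn
    rw [hasucc n hn]
    have := Fmono2 (a n) (hanonneg n) (Set.self_mem_Ici)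
      (Set.mem_Ici.mpr zero_le_one) zero_lt_one
    simpa [Fx0 _ (hanonneg n)] using this
  have hamono : ∀ m n : ℕ, 1 ≤ m → m ≤ n → a m ≤ a n := by
    intro m n hm hmn
    induction n, hmn using Nat.le_induction with
    | base => exact le_rfl
    | succ n hmn ih => exact le_trans ih (hastep n (le_trans hm hmn)).le
  have hapos : ∀ n, 1 ≤ n → 0 < a n := by
    intro n hn
    calc (0:ℝ) < 1 := zero_lt_one
    _ = a 1 := ha1.symm
    _ ≤ a n := hamono 1 n le_rfl hn
  have hamul : ∀ m n : ℕ, 1 ≤ m → 1 ≤ n → a (m * n) = a m * a n := by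
    intro m n hm hn
    induction n, hn using Nat.le_induction with
    | base => simp [ha1]
    | succ n hn ih =>
      have h1 : 1 ≤ m * n := Nat.one_le_iff_ne_zero.mpr (by positivity)
      rw [mul_add, mul_one, haadd (m*n) m h1 hm, ih]
      have : A 2 ![a m * a n, a m] = A 2 ![a m * a n, a m * 1] := by rw [mul_one]
      rw [this, Fhom (a m) (a n) 1 (hanonneg m) (hanonneg n) zero_le_one,
        ← hasucc n hn]
  have ha2 : 1 < a 2 := by
    have h := hasucc 1 le_rfl
    rw [ha1] at h
    have hlt : A 2 ![(1:ℝ), 0] < A 2 ![(1:ℝ), 1] :=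
      Fmono2 1 zero_le_one Set.self_mem_Ici (Set.mem_Ici.mpr zero_le_one) zero_lt_one
    rw [Fx0 1 zero_le_one] at hlt
    rw [show (2:ℕ) = 1 + 1 from rfl, h]
    exact hlt
  -- power law
  set θ : ℝ := Real.log (a 2) / Real.log 2 with hθdef
  have hθpos : 0 < θ :=
    div_pos (Real.log_pos ha2) (Real.log_pos (by norm_num))
  have hpow : ∀ n : ℕ, 1 ≤ n → a n = (n:ℝ) ^ θ :=
    aux_pow_law a hapos ha1 hamul hamono ha2
  have hθne : θ ≠ 0 := hθpos.ne'
  -- F at rational points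
  have Frat : ∀ p q : ℕ, 1 ≤ p → 1 ≤ q →
      A 2 ![((p:ℝ)/q) ^ θ, 1] = ((p:ℝ)/q + 1) ^ θ := by
    intro p q hp hq
    have hqpos : (0:ℝ) < q := by exact_mod_cast hq
    have hppos : (0:ℝ) < p := by exact_mod_cast hp
    have h1 : a (p + q) = A 2 ![a p, a q] := haadd p q hp hq
    rw [hpow p hp, hpow q hq, hpow (p+q) (by omega)] at h1
    have e1 : ((p:ℝ)) ^ θ = (q:ℝ)^θ * (((p:ℝ)/q) ^ θ) := by
      rw [Real.div_rpow hppos.le hqpos.le]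
      field_simp
    have h2 : A 2 ![(q:ℝ)^θ * (((p:ℝ)/q) ^ θ), (q:ℝ)^θ * 1] =
        (q:ℝ)^θ * A 2 ![((p:ℝ)/q) ^ θ, 1] :=
      Fhom _ _ _ (by positivity) (by positivity) zero_le_one
    rw [mul_one] at h2
    rw [e1, h2] at h1
    have hq' : ((q:ℝ))^θ ≠ 0 := by positivity
    have h3 : A 2 ![((p:ℝ)/q) ^ θ, 1] = (((p:ℕ):ℝ) + q)^θ / (q:ℝ)^θ := by
      rw [eq_div_iff hq']
      push_cast at h1 ⊢
      linarith [h1]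
    rw [h3, ← Real.div_rpow (by positivity) hqpos.le]
    congr 1
    field_simp
  have hrat : ∀ r : ℚ, 0 < r → A 2 ![(r:ℝ) ^ θ, 1] = ((r:ℝ) + 1) ^ θ := by
    intro r hr
    have hnum : 0 < r.num := Rat.num_pos.mpr hr
    have hp : 1 ≤ r.num.toNat := by omega
    have hq : 1 ≤ r.den := r.den_pos
    have hcast : ((r.num.toNat : ℕ):ℝ)/(r.den:ℝ) = (r:ℝ) := by
      rw [Rat.cast_def]
      congr 1
      exact_mod_cast Int.toNat_of_nonneg hnum.le
    rw [← hcast]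
    exact Frat _ _ hp hq
  -- monotone version in the first coordinate
  have Fmono1' : ∀ x1 x2 : ℝ, 0 ≤ x1 → x1 ≤ x2 → A 2 ![x1, 1] ≤ A 2 ![x2, 1] := by
    intro x1 x2 h1 h12
    rcases eq_or_lt_of_le h12 with rfl | h
    · exact le_rfl
    · exact (Fmono1 1 zero_le_one (Set.mem_Ici.mpr h1)
        (Set.mem_Ici.mpr (h1.trans h12)) h).le
  have hf1 : ∀ x : ℝ, 0 ≤ x → 1 ≤ A 2 ![x, 1] := by
    intro x hx
    calc (1:ℝ) = A 2 ![0, 1] := (F0y 1 zero_le_one).symm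
    _ ≤ A 2 ![x, 1] := Fmono1' 0 x le_rfl hx
  -- the functional form of F(·,1)
  have fform : ∀ x : ℝ, 0 ≤ x → A 2 ![x, 1] = (x ^ (1/θ) + 1) ^ θ := by
    intro x hx
    rcases eq_or_lt_of_le hx with rfl | hxpos
    · rw [F0y 1 zero_le_one, Real.zero_rpow (by positivity : (1:ℝ)/θ ≠ 0)]
      norm_num
    set v := A 2 ![x, 1] with hvdef
    set u := x ^ (1/θ) with hudef
    have hupos : 0 < u := Real.rpow_pos_of_pos hxpos _
    have hv1 : 1 ≤ v := hf1 x hx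
    have hvpos : 0 < v := lt_of_lt_of_le zero_lt_one hv1
    have huθ : u ^ θ = x := by
      rw [hudef, ← Real.rpow_mul hx, one_div, inv_mul_cancel₀ hθne, Real.rpow_one]
    have hvθ : (v ^ (1/θ)) ^ θ = v := by
      rw [← Real.rpow_mul hvpos.le, one_div, inv_mul_cancel₀ hθne, Real.rpow_one]
    have hw1 : 1 ≤ v ^ (1/θ) := by
      calc (1:ℝ) = 1 ^ (1/θ) := (Real.one_rpow _).symm
      _ ≤ v ^ (1/θ) := Real.rpow_le_rpow zero_le_one hv1 (by positivity)
    by_contra hne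
    rcases lt_or_gt_of_ne hne with hlt | hgt
    · -- v < (u+1)^θ ; find rational r with v^(1/θ) - 1 < r < u
      have hlt' : v ^ (1/θ) < u + 1 := by
        have := Real.rpow_lt_rpow hvpos.le hlt (by positivity : 0 < 1/θ)
        rwa [← Real.rpow_mul (by positivity : (0:ℝ) ≤ u+1), mul_one_div,
          div_self hθne, Real.rpow_one] at this
      obtain ⟨r, hr1, hr2⟩ := exists_rat_btwn (show v ^ (1/θ) - 1 < u by linarith)
      have hrpos : 0 < r := by
        have : (0:ℝ) < (r:ℝ) := lt_of_le_of_lt (by linarith) hr1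
        exact_mod_cast this
      have hrθx : (r:ℝ) ^ θ ≤ x := by
        rw [← huθ]
        exact Real.rpow_le_rpow (by positivity) hr2.le hθpos.le
      have hup : v < ((r:ℝ) + 1) ^ θ := by
        calc v = (v ^ (1/θ)) ^ θ := hvθ.symm
        _ < ((r:ℝ) + 1) ^ θ :=
          Real.rpow_lt_rpow (by positivity) (by linarith) hθpos
      have hdown : A 2 ![(r:ℝ) ^ θ, 1] ≤ v :=
        Fmono1' _ _ (by positivity) hrθx
      rw [hrat r hrpos] at hdown
      linarith
    · -- v > (u+1)^θ : find rational r with u < r < v^(1/θ) - 1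
      have hgt' : u + 1 < v ^ (1/θ) := by
        have := Real.rpow_lt_rpow (by positivity : (0:ℝ) ≤ (u+1)^θ) hgt
          (by positivity : 0 < 1/θ)
        rwa [← Real.rpow_mul (by positivity : (0:ℝ) ≤ u+1), mul_one_div,
          div_self hθne, Real.rpow_one] at this
      obtain ⟨r, hr1, hr2⟩ := exists_rat_btwn (show u < v ^ (1/θ) - 1 by linarith)
      have hrpos : 0 < r := by
        have : (0:ℝ) < (r:ℝ) := lt_of_le_of_lt hupos.le hr1
        exact_mod_cast this
      have hxrθ : x ≤ (r:ℝ) ^ θ := by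
        rw [← huθ]
        exact Real.rpow_le_rpow (by positivity) hr1.le hθpos.le
      have hup : ((r:ℝ) + 1) ^ θ < v := by
        calc ((r:ℝ) + 1) ^ θ < (v ^ (1/θ)) ^ θ :=
          Real.rpow_lt_rpow (by positivity) (by linarith) hθpos
        _ = v := hvθ
      have hdown : v ≤ A 2 ![(r:ℝ) ^ θ, 1] :=
        Fmono1' _ _ hx hxrθ
      rw [hrat r hrpos] at hdown
      linarith
  -- two-variable formula
  have Fxy : ∀ x y : ℝ, 0 ≤ x → 0 ≤ y →
      A 2 ![x, y] = (x ^ (1/θ) + y ^ (1/θ)) ^ θ := by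
    intro x y hx hy
    rcases eq_or_lt_of_le hy with rfl | hypos
    · have e1 : x ^ ((1/θ) * θ) = x := by
        rw [one_div, inv_mul_cancel₀ hθne, Real.rpow_one]
      rw [Fx0 x hx, Real.zero_rpow (by positivity : (1:ℝ)/θ ≠ 0), add_zero,
        ← Real.rpow_mul hx, e1]
    · have h := Fhom y (x/y) 1 hypos.le (by positivity) zero_le_one
      have e : y * (x/y) = x := by field_simp
      rw [e, mul_one] at h
      rw [h, fform (x/y) (by positivity)]
      have hyk : (y ^ (1/θ)) ^ θ = y := by
        rw [← Real.rpow_mul hypos.le, one_div, inv_mul_cancel₀ hθne, Real.rpow_one]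
      calc y * ((x/y) ^ (1/θ) + 1) ^ θ
          = (y ^ (1/θ)) ^ θ * ((x/y) ^ (1/θ) + 1) ^ θ := by rw [hyk]
      _ = (y ^ (1/θ) * ((x/y) ^ (1/θ) + 1)) ^ θ :=
          (Real.mul_rpow (by positivity) (by positivity)).symm
      _ = (x ^ (1/θ) + y ^ (1/θ)) ^ θ := by
          congr 1
          rw [Real.div_rpow hx hypos.le]
          have hyne : y ^ (1/θ) ≠ 0 := by positivity
          field_simp
  -- the general formula by induction
  have main : ∀ n : ℕ, 1 ≤ n → ∀ x : Fin n → ℝ, (∀ i, 0 ≤ x i) →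
      A n x = (∑ i, x i ^ (1/θ)) ^ θ := by
    intro n hn
    induction n, hn using Nat.le_induction with
    | base =>
      intro x hx
      have e : (fun _ : Fin 1 => x 0) = x := by
        funext j; rw [Subsingleton.elim j 0]
      conv_lhs => rw [← e]
      rw [hA_one (x 0) (hx 0), Fin.sum_univ_one, ← Real.rpow_mul (hx 0),
        one_div, inv_mul_cancel₀ hθne, Real.rpow_one]
    | succ n hn ih =>
      intro x hx
      have h := hA_assoc n 1 hn le_rfl x hx
      have e2 : (fun j : Fin 1 => x (Fin.natAdd n j)) = fun _ => x (Fin.natAdd n 0) := by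
        funext j; rw [Subsingleton.elim j 0]
      rw [e2, hA_one _ (hx _)] at h
      have hx' : ∀ j : Fin n, 0 ≤ x (Fin.castAdd 1 j) := fun j => hx _
      have hS := ih (fun j => x (Fin.castAdd 1 j)) hx'
      have hSnn : 0 ≤ ∑ j : Fin n, x (Fin.castAdd 1 j) ^ (1/θ) :=
        Finset.sum_nonneg fun j _ => Real.rpow_nonneg (hx' j) _
      rw [hS] at h
      rw [h, Fxy _ _ (Real.rpow_nonneg hSnn θ) (hx _)]
      congr 1
      rw [← Real.rpow_mul hSnn, mul_one_div, div_self hθne, Real.rpow_one,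
        Fin.sum_univ_castSucc]
      rfl
  refine ⟨1/θ, by positivity, ?_⟩
  intro n hn x hx
  rw [one_div_one_div]
  exact main n hn x hx
end

section
/- Let (Θ, 𝔉, μ) be a measure space, Ω a set, Γ a set, and λ : Ω × Γ → [0,∞) a loss function. Let f : [0,∞) → (0,1] be a weighting profile with inverse g : (0,1] → [0,∞). Fix outcomes ω_1,…,ω_T ∈ Ω and maps ξ_1,…,ξ_T : Θ → Γ such that θ ↦ λ(ω, ξ_t(θ)) is measurable for every ω and t. Let P_0 : Θ → [0,∞) be a measurable prior density with ∫_Θ P_0 dμ = 1, define the weights P_t(θ) = f(λ(ω_t, ξ_t(θ)))·P_{t−1}(θ) for t = 1,…,T, the normalized weights P*_{t−1}(θ) = P_{t−1}(θ)/∫_Θ P_{t−1} dμ, and the pseudo-prediction losses ψ_t(ω_t) = g(∫_Θ f(λ(ω_t, ξ_t(θ))) P*_{t−1}(θ) dμ(θ)). Then g(∏_{t=1}^T f(ψ_t(ω_t))) = g(∫_Θ f(A_T(θ)) P_0(θ) dμ(θ)), where A_T(θ) = g(∏_{t=1}^T f(λ(ω_t, ξ_t(θ)))) is the quasi-sum aggregated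 loss of expert θ; equivalently, ∫_Θ ∏_{t=1}^T f(λ(ω_t, ξ_t(θ))) P_0(θ) dμ(θ) = ∏_{t=1}^T f(ψ_t(ω_t)). -/
/-!
Since `P_t = (∏_{s ≤ t} f(λ_s)) · P_0`, the mass `∫ P_t` of the weights gets multiplied at step `t`
by `∫ f(λ_t) P*_{t-1} = f(ψ_t)`, where `f ∘ g = id` applies because this number lies in `(0, 1]`.
Telescoping these factors from `∫ P_0 = 1` gives `∫ P_T = ∏_t f(ψ_t)`.
-/

open MeasureTheory Set

theorem ContinuousOn.measurable_comp_of_forall_mem {α β γ : Type*} [MeasurableSpace α]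
    [TopologicalSpace β] [MeasurableSpace β] [OpensMeasurableSpace β]
    [TopologicalSpace γ] [MeasurableSpace γ] [BorelSpace γ]
    {f : β → γ} {s : Set β} {u : α → β} (hf : ContinuousOn f s) (hu : Measurable u)
    (hus : ∀ x, u x ∈ s) : Measurable fun x => f (u x) :=
  hf.domRestrict.measurable.comp (hu.subtype_mk (h := hus))

theorem Fin.eq_prod_mul_of_succ_eq {M : Type*} [CommMonoid M] {T : ℕ} {r : Fin T → M}
    {a : ℕ → M} (h : ∀ t : Fin T, a (t + 1) = r t * a t) : a T = (∏ t, r t) * a 0 := by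
  induction T with
  | zero => simp
  | succ T ih =>
    rw [Fin.prod_univ_castSucc, mul_comm _ (r (Fin.last T)), mul_assoc,
      ← ih fun t => h t.castSucc]
    exact h (Fin.last T)

section PositiveWeight

variable {Θ : Type*} [MeasurableSpace Θ] {μ : Measure Θ} {h w : Θ → ℝ}

structure IsPositiveWeight (μ : Measure Θ) (w : Θ → ℝ) : Prop where
  integrable : Integrable w μ
  nonneg : 0 ≤ w
  integral_pos : 0 < ∫ θ, w θ ∂μ

namespace IsPositiveWeight

theorem mul {c : ℝ} (hw : IsPositiveWeight μ w) (hh_meas : AEStronglyMeasurable h μ)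
    (hh_pos : ∀ θ, 0 < h θ) (hh_le : ∀ θ, h θ ≤ c) :
    IsPositiveWeight μ fun θ => h θ * w θ := by
  have hint : Integrable (fun θ => h θ * w θ) μ :=
    hw.integrable.bdd_mul hh_meas (ae_of_all _ fun θ => by
      rw [Real.norm_of_nonneg (hh_pos θ).le]; exact hh_le θ)
  have hnonneg : 0 ≤ fun θ => h θ * w θ := fun θ => mul_nonneg (hh_pos θ).le (hw.nonneg θ)
  refine ⟨hint, hnonneg, ?_⟩
  have hsupp : Function.support (fun θ => h θ * w θ) = Function.support w := by
    ext θ; simp [(hh_pos θ).ne']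
  rw [integral_pos_iff_support_of_nonneg hnonneg hint, hsupp,
    ← integral_pos_iff_support_of_nonneg hw.nonneg hw.integrable]
  exact hw.integral_pos

theorem integral_mul_div_integral_mem_Ioc (hw : IsPositiveWeight μ w)
    (hh_meas : AEStronglyMeasurable h μ) (hh : ∀ θ, h θ ∈ Ioc 0 1) :
    (∫ θ, h θ * w θ ∂μ) / ∫ θ, w θ ∂μ ∈ Ioc 0 1 := by
  have hhw := hw.mul hh_meas (fun θ => (hh θ).1) fun θ => (hh θ).2
  refine ⟨div_pos hhw.integral_pos hw.integral_pos, (div_le_one hw.integral_pos).mpr ?_⟩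
  exact integral_mono hhw.integrable hw.integrable fun θ =>
    mul_le_of_le_one_left (hw.nonneg θ) (hh θ).2

theorem of_succ_eq {T : ℕ} {F : Fin T → Θ → ℝ} {P : ℕ → Θ → ℝ}
    (hP0 : IsPositiveWeight μ (P 0)) (hF_meas : ∀ t, AEStronglyMeasurable (F t) μ)
    (hF : ∀ t θ, F t θ ∈ Ioc 0 1) (hP : ∀ (t : Fin T) θ, P (t + 1) θ = F t θ * P t θ) :
    ∀ n ≤ T, IsPositiveWeight μ (P n) := by
  intro n hn
  induction n with
  | zero => exact hP0
  | succ n ih =>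
    have hstep : P (n + 1) = fun θ => F ⟨n, hn⟩ θ * P n θ := funext (hP ⟨n, hn⟩)
    rw [hstep]
    exact (ih (by omega)).mul (hF_meas _) (fun θ => (hF _ θ).1) fun θ => (hF _ θ).2

end IsPositiveWeight

end PositiveWeight

theorem stmt_3_general
    {Θ Ω Γ : Type*} [MeasurableSpace Θ] (μ : Measure Θ)
    (lam : Ω → Γ → ℝ) (hlam_nonneg : ∀ (w : Ω) (γ : Γ), 0 ≤ lam w γ)
    -- weighting profile f with inverse g
    (f g : ℝ → ℝ)
    (hf_cont : ContinuousOn f (Set.Ici (0 : ℝ)))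
    (hf_mem : ∀ x : ℝ, 0 ≤ x → f x ∈ Set.Ioc (0 : ℝ) 1)
    (hg_right : ∀ y ∈ Set.Ioc (0 : ℝ) 1, f (g y) = y)
    -- outcomes and expert predictions
    (T : ℕ) (ω : Fin T → Ω) (ξ : Fin T → Θ → Γ)
    (hmeas : ∀ (t : Fin T) (w : Ω), Measurable fun θ => lam w (ξ t θ))
    -- prior density
    (P0 : Θ → ℝ) (hP0_nonneg : ∀ θ, 0 ≤ P0 θ)
    (hP0_int : Integrable P0 μ) (hP0_one : (∫ θ, P0 θ ∂μ) = 1)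
    -- weight updates
    (P : ℕ → Θ → ℝ)
    (hP_init : P 0 = P0)
    (hP_step : ∀ (t : Fin T) (θ : Θ),
      P ((t : ℕ) + 1) θ = f (lam (ω t) (ξ t θ)) * P (t : ℕ) θ)
    -- pseudo-prediction losses (using the normalized weights P*_{t-1})
    (ψ : Fin T → ℝ)
    (hψ : ∀ t : Fin T, ψ t =
      g (∫ θ, f (lam (ω t) (ξ t θ)) * (P (t : ℕ) θ / ∫ θ', P (t : ℕ) θ' ∂μ) ∂μ)) :
    g (∏ t, f (ψ t)) = g (∫ θ, f (g (∏ t, f (lam (ω t) (ξ t θ)))) * P0 θ ∂μ) ∧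
    (∫ θ, (∏ t, f (lam (ω t) (ξ t θ))) * P0 θ ∂μ) = ∏ t, f (ψ t) := by
  set F : Fin T → Θ → ℝ := fun t θ => f (lam (ω t) (ξ t θ))
  have hF : ∀ t θ, F t θ ∈ Ioc 0 1 := fun t θ => hf_mem _ (hlam_nonneg _ _)
  have hF_meas : ∀ t, AEStronglyMeasurable (F t) μ := fun t =>
    (hf_cont.measurable_comp_of_forall_mem (hmeas t (ω t)) fun θ =>
      hlam_nonneg _ _).aestronglyMeasurable
  have hP0 : IsPositiveWeight μ (P 0) :=
    ⟨hP_init ▸ hP0_int, hP_init ▸ hP0_nonneg, by rw [hP_init, hP0_one]; exact one_pos⟩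
  have hW := IsPositiveWeight.of_succ_eq hP0 hF_meas hF hP_step
  have hmass : ∀ t : Fin T, ∫ θ, P (t + 1) θ ∂μ = f (ψ t) * ∫ θ, P t θ ∂μ := by
    intro t
    have hWt := hW t t.isLt.le
    have hratio : f (ψ t) = (∫ θ, P (t + 1) θ ∂μ) / ∫ θ, P t θ ∂μ := by
      rw [hψ t]
      simp only [mul_div_assoc', integral_div]
      rw [hg_right _ (hWt.integral_mul_div_integral_mem_Ioc (hF_meas t) (hF t))]
      simp only [F, hP_step]
    rw [hratio, div_mul_cancel₀ _ hWt.integral_pos.ne']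
  have hmass_T : ∫ θ, P T θ ∂μ = ∏ t, f (ψ t) := by
    rw [Fin.eq_prod_mul_of_succ_eq (a := fun n => ∫ θ, P n θ ∂μ) hmass, hP_init, hP0_one,
      mul_one]
  have hP_T : ∀ θ, P T θ = (∏ t, F t θ) * P0 θ := fun θ => by
    rw [Fin.eq_prod_mul_of_succ_eq (a := fun n => P n θ) fun t => hP_step t θ, hP_init]
  have hfg : ∀ θ, f (g (∏ t, F t θ)) = ∏ t, F t θ := fun θ =>
    hg_right _ ⟨Finset.prod_pos fun t _ => (hF t θ).1,
      Finset.prod_le_one (fun t _ => (hF t θ).1.le) fun t _ => (hF t θ).2⟩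
  have hint : ∫ θ, (∏ t, F t θ) * P0 θ ∂μ = ∏ t, f (ψ t) := by
    simp only [← hP_T, hmass_T]
  refine ⟨?_, hint⟩
  rw [← hint]
  exact congrArg g (integral_congr_ae (ae_of_all _ fun θ => congrArg (· * P0 θ) (hfg θ).symm))

/-- **Bound for APA loss (exact identity, Lemma `lemma-APA`).**
For a weighting profile `f` with inverse `g`, prior density `P0`, AA weight updates
`P_t θ = f (λ(ω_t, ξ_t θ)) · P_{t-1} θ` and pseudo-prediction losses
`ψ_t = g (∫ f (λ(ω_t, ξ_t θ)) P*_{t-1} θ dμ)`, the quasi-sum aggregated loss of the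
APA equals `g (∫ f (A_T θ) P0 θ dμ)`, where `A_T θ = g (∏_t f (λ(ω_t, ξ_t θ)))`;
equivalently `∫ ∏_t f (λ(ω_t, ξ_t θ)) P0 θ dμ = ∏_t f (ψ_t)`. -/
theorem stmt_3
    {Θ Ω Γ : Type*} [MeasurableSpace Θ] (μ : Measure Θ)
    (lam : Ω → Γ → ℝ) (hlam_nonneg : ∀ (w : Ω) (γ : Γ), 0 ≤ lam w γ)
    -- weighting profile f with inverse g
    (f g : ℝ → ℝ)
    (hf_cont : ContinuousOn f (Set.Ici (0 : ℝ)))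
    (hf_anti : StrictAntiOn f (Set.Ici (0 : ℝ)))
    (hf0 : f 0 = 1)
    (hf_mem : ∀ x : ℝ, 0 ≤ x → f x ∈ Set.Ioc (0 : ℝ) 1)
    (hf_lim : Filter.Tendsto f Filter.atTop (nhds 0))
    (hg_left : ∀ x : ℝ, 0 ≤ x → g (f x) = x)
    (hg_right : ∀ y ∈ Set.Ioc (0 : ℝ) 1, f (g y) = y)
    (hg_nonneg : ∀ y ∈ Set.Ioc (0 : ℝ) 1, 0 ≤ g y)
    -- outcomes and expert predictions
    (T : ℕ) (ω : Fin T → Ω) (ξ : Fin T → Θ → Γ)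
    (hmeas : ∀ (t : Fin T) (w : Ω), Measurable fun θ => lam w (ξ t θ))
    -- prior density
    (P0 : Θ → ℝ) (hP0_meas : Measurable P0) (hP0_nonneg : ∀ θ, 0 ≤ P0 θ)
    (hP0_int : Integrable P0 μ) (hP0_one : (∫ θ, P0 θ ∂μ) = 1)
    -- weight updates
    (P : ℕ → Θ → ℝ)
    (hP_init : P 0 = P0)
    (hP_step : ∀ (t : Fin T) (θ : Θ),
      P ((t : ℕ) + 1) θ = f (lam (ω t) (ξ t θ)) * P (t : ℕ) θ)
    -- pseudo-prediction losses (using the normalized weights P*_{t-1})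
    (ψ : Fin T → ℝ)
    (hψ : ∀ t : Fin T, ψ t =
      g (∫ θ, f (lam (ω t) (ξ t θ)) * (P (t : ℕ) θ / ∫ θ', P (t : ℕ) θ' ∂μ) ∂μ)) :
    g (∏ t, f (ψ t)) = g (∫ θ, f (g (∏ t, f (lam (ω t) (ξ t θ)))) * P0 θ ∂μ) ∧
    (∫ θ, (∏ t, f (lam (ω t) (ξ t θ))) * P0 θ ∂μ) = ∏ t, f (ψ t) :=
  stmt_3_general μ lam hlam_nonneg f g hf_cont hf_mem hg_right T ω ξ hmeas P0 hP0_nonneg hP0_int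
    hP0_one P hP_init hP_step ψ hψ
end

section
/- Let Ω and Γ be sets and λ : Ω × Γ → [0,∞) a loss function. Let f : [0,∞) → (0,1] be a weighting profile with inverse g. Consider n experts indexed by θ ∈ {1,…,n} with uniform prior P_0(θ) = 1/n, outcomes ω_1,…,ω_T ∈ Ω and expert predictions ξ_t(θ) ∈ Γ. Define weights P_t(θ) = f(λ(ω_t, ξ_t(θ)))·P_{t−1}(θ) and pseudo-prediction losses ψ_t(ω_t) = g(∑_{θ=1}^n f(λ(ω_t, ξ_t(θ))) P_{t−1}(θ) / ∑_{θ=1}^n P_{t−1}(θ)). Then for every expert θ* ∈ {1,…,n}, g(∏_{t=1}^T f(ψ_t(ω_t))) ≤ g(f(A_T(θ*))/n), where A_T(θ*) = g(∏_{t=1}^T f(λ(ω_t, ξ_t(θ*)))); the right-hand side equals the binary quasi-sum aggregation of A_T(θ*) and g(1/n). -/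
/-- **APA-QS bound for finitely many experts with uniform prior.**
With `n` experts, uniform prior `P₀ θ = 1/n`, weight updates
`P_t θ = f (λ(ω_t, ξ_t θ)) · P_{t-1} θ` and pseudo-prediction losses
`ψ_t = g (∑_θ f (λ(ω_t, ξ_t θ)) P_{t-1} θ / ∑_θ P_{t-1} θ)`, the quasi-sum aggregated
APA loss satisfies `g (∏_t f ψ_t) ≤ g (f (A_T θ*) / n)` for every expert `θ*`, where
`A_T θ* = g (∏_t f (λ(ω_t, ξ_t θ*)))`, and the right-hand side is the binary
quasi-sum aggregation of `A_T θ*` and `g (1/n)`. -/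
theorem stmt_4
    {Ω Γ : Type*}
    (lam : Ω → Γ → ℝ) (hlam_nonneg : ∀ (w : Ω) (γ : Γ), 0 ≤ lam w γ)
    -- weighting profile f with inverse g
    (f g : ℝ → ℝ)
    (hf_cont : ContinuousOn f (Set.Ici (0 : ℝ)))
    (hf_anti : StrictAntiOn f (Set.Ici (0 : ℝ)))
    (hf0 : f 0 = 1)
    (hf_mem : ∀ x : ℝ, 0 ≤ x → f x ∈ Set.Ioc (0 : ℝ) 1)
    (hf_lim : Filter.Tendsto f Filter.atTop (nhds 0))
    (hg_left : ∀ x : ℝ, 0 ≤ x → g (f x) = x)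
    (hg_right : ∀ y ∈ Set.Ioc (0 : ℝ) 1, f (g y) = y)
    (hg_nonneg : ∀ y ∈ Set.Ioc (0 : ℝ) 1, 0 ≤ g y)
    -- n experts, outcomes, predictions
    (n : ℕ) (hn : 1 ≤ n) (T : ℕ) (ω : Fin T → Ω) (ξ : Fin T → Fin n → Γ)
    -- uniform prior and weight updates
    (P : ℕ → Fin n → ℝ)
    (hP_init : ∀ θ, P 0 θ = 1 / (n : ℝ))
    (hP_step : ∀ (t : Fin T) (θ : Fin n),
      P ((t : ℕ) + 1) θ = f (lam (ω t) (ξ t θ)) * P (t : ℕ) θ)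
    -- pseudo-prediction losses
    (ψ : Fin T → ℝ)
    (hψ : ∀ t : Fin T, ψ t =
      g ((∑ θ, f (lam (ω t) (ξ t θ)) * P (t : ℕ) θ) / ∑ θ, P (t : ℕ) θ)) :
    ∀ θs : Fin n,
      g (∏ t, f (ψ t)) ≤ g (f (g (∏ t, f (lam (ω t) (ξ t θs)))) / (n : ℝ)) ∧
      g (f (g (∏ t, f (lam (ω t) (ξ t θs)))) / (n : ℝ)) =
        g (f (g (∏ t, f (lam (ω t) (ξ t θs)))) * f (g (1 / (n : ℝ)))) := by
  intro θs
  haveI : NeZero n := ⟨by omega⟩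
  have hn' : (0:ℝ) < n := by exact_mod_cast Nat.pos_of_ne_zero (by omega)
  have hf_pos : ∀ x, 0 ≤ x → 0 < f x := fun x hx => (hf_mem x hx).1
  have hf_le1 : ∀ x, 0 ≤ x → f x ≤ 1 := fun x hx => (hf_mem x hx).2
  set S : ℕ → ℝ := fun t => ∑ θ, P t θ with hS_def
  -- positivity of weights
  have hP_pos : ∀ k, k ≤ T → ∀ θ, 0 < P k θ := by
    intro k
    induction k with
    | zero => intro _ θ; rw [hP_init]; positivity
    | succ k ih =>
      intro hk θ
      have hkT : k < T := hk
      have := hP_step ⟨k, hkT⟩ θ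
      simp only [Fin.val_mk] at this
      rw [this]
      exact mul_pos (hf_pos _ (hlam_nonneg _ _)) (ih hkT.le θ)
  have hS_pos : ∀ k, k ≤ T → 0 < S k := by
    intro k hk
    exact Finset.sum_pos (fun θ _ => hP_pos k hk θ) Finset.univ_nonempty
  have hS0 : S 0 = 1 := by
    simp only [hS_def, hP_init, Finset.sum_const, Finset.card_univ, Fintype.card_fin,
      nsmul_eq_mul]
    field_simp
  -- g is antitone on (0,1]
  have g_anti : ∀ y₁ ∈ Set.Ioc (0:ℝ) 1, ∀ y₂ ∈ Set.Ioc (0:ℝ) 1, y₁ ≤ y₂ → g y₂ ≤ g y₁ := by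
    intro y₁ h₁ y₂ h₂ hle
    by_contra hlt
    push_neg at hlt
    have := hf_anti (hg_nonneg y₁ h₁) (hg_nonneg y₂ h₂) hlt
    rw [hg_right y₁ h₁, hg_right y₂ h₂] at this
    linarith
  -- sum recursion
  have hS_succ : ∀ t : Fin T, S ((t:ℕ)+1) = ∑ θ, f (lam (ω t) (ξ t θ)) * P (t:ℕ) θ := by
    intro t
    simp only [hS_def]
    exact Finset.sum_congr rfl (fun θ _ => hP_step t θ)
  -- ratio in (0,1] and f (ψ t) = S (t+1) / S t
  have hratio : ∀ t : Fin T, S ((t:ℕ)+1) / S (t:ℕ) ∈ Set.Ioc (0:ℝ) 1 := by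
    intro t
    have h1 : 0 < S (t:ℕ) := hS_pos _ t.isLt.le
    have h2 : 0 < S ((t:ℕ)+1) := hS_pos _ t.isLt
    constructor
    · positivity
    · rw [div_le_one h1, hS_succ t]
      refine Finset.sum_le_sum (fun θ _ => ?_)
      exact mul_le_of_le_one_left (hP_pos _ t.isLt.le θ).le
        (hf_le1 _ (hlam_nonneg _ _))
  have hfψ : ∀ t : Fin T, f (ψ t) = S ((t:ℕ)+1) / S (t:ℕ) := by
    intro t
    rw [hψ t, ← hS_succ t]
    exact hg_right _ (hratio t)
  -- telescoping product
  have htel : ∀ k, k ≤ T → ∏ m ∈ Finset.range k, (S (m+1) / S m) = S k := by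
    intro k
    induction k with
    | zero => intro _; simp [hS0]
    | succ k ih =>
      intro hk
      rw [Finset.prod_range_succ, ih (by omega)]
      have h1 := (hS_pos k (by omega)).ne'
      field_simp
  have hprod : (∏ t, f (ψ t)) = S T := by
    have h2 := Fin.prod_univ_eq_prod_range (fun m => S (m+1) / S m) T
    rw [htel T le_rfl] at h2
    rw [← h2]
    exact Finset.prod_congr rfl (fun t _ => hfψ t)
  -- value of P k θs
  set L : ℕ → ℝ := fun m => if h : m < T then f (lam (ω ⟨m,h⟩) (ξ ⟨m,h⟩ θs)) else 1
    with hL_def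
  have hPval : ∀ k, k ≤ T → P k θs = (∏ m ∈ Finset.range k, L m) / n := by
    intro k
    induction k with
    | zero => intro _; simp [hP_init]
    | succ k ih =>
      intro hk
      have hkT : k < T := hk
      have hstep := hP_step ⟨k, hkT⟩ θs
      simp only [Fin.val_mk] at hstep
      rw [hstep, ih hkT.le, Finset.prod_range_succ, hL_def]
      simp only [dif_pos hkT]
      ring
  have hLeq : (∏ t, f (lam (ω t) (ξ t θs))) = ∏ m ∈ Finset.range T, L m := by
    rw [← Fin.prod_univ_eq_prod_range L T]
    refine Finset.prod_congr rfl (fun t _ => ?_)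
    simp [hL_def, t.isLt]
  set Pi : ℝ := ∏ t, f (lam (ω t) (ξ t θs)) with hPi_def
  have hPimem : Pi ∈ Set.Ioc (0:ℝ) 1 := by
    constructor
    · exact Finset.prod_pos (fun t _ => hf_pos _ (hlam_nonneg _ _))
    · exact Finset.prod_le_one (fun t _ => (hf_pos _ (hlam_nonneg _ _)).le)
        (fun t _ => hf_le1 _ (hlam_nonneg _ _))
  have hfgPi : f (g Pi) = Pi := hg_right _ hPimem
  have hinv_mem : (1:ℝ)/n ∈ Set.Ioc (0:ℝ) 1 := by
    constructor
    · positivity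
    · rw [div_le_one hn']; exact_mod_cast hn
  -- main inequality
  have hle : Pi / n ≤ S T := by
    have := hPval T le_rfl
    rw [← hLeq] at this
    calc Pi / n = P T θs := this.symm
      _ ≤ S T := Finset.single_le_sum (fun θ _ => (hP_pos T le_rfl θ).le)
          (Finset.mem_univ θs)
  have hST_mem : S T ∈ Set.Ioc (0:ℝ) 1 := by
    constructor
    · exact hS_pos T le_rfl
    · rw [← hprod]
      refine Finset.prod_le_one (fun t _ => ?_) (fun t _ => ?_)
      · rw [hfψ t]; exact (hratio t).1.le
      · rw [hfψ t]; exact (hratio t).2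
  have hPin_mem : Pi / n ∈ Set.Ioc (0:ℝ) 1 := by
    constructor
    · have := hPimem.1; positivity
    · calc Pi / n ≤ 1 / n := by
            gcongr
            exact hPimem.2
          _ ≤ 1 := hinv_mem.2
  constructor
  · rw [hprod, hfgPi]
    exact g_anti _ hPin_mem _ hST_mem hle
  · rw [hg_right _ hinv_mem, hfgPi, div_eq_mul_one_div]
end

section
/- Let Ω and Γ be sets, λ : Ω × Γ → [0,∞) a loss function, f : [0,∞) → (0,1] a weighting profile with inverse g, and η ∈ (0,∞) a learning rate. Set f_η(x) = f(x)^η and let g_η be its inverse, g_η(y) = g(y^{1/η}). Consider n experts with uniform prior P_0(θ) = 1/n, outcomes ω_1,…,ω_T, predictions ξ_t(θ) ∈ Γ, weights P_t(θ) = f_η(λ(ω_t, ξ_t(θ)))·P_{t−1}(θ), and pseudo-prediction losses ψ_t(ω_t) = g_η(∑_{θ=1}^n f_η(λ(ω_t, ξ_t(θ))) P_{t−1}(θ) / ∑_{θ=1}^n P_{t−1}(θ)). Then for every expert θ*, g(∏_{t=1}^T f(ψ_t(ω_t))) ≤ g(f(A_T(θ*)) · f(g_η(1/n))), where A_T(θ*)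 = g(∏_{t=1}^T f(λ(ω_t, ξ_t(θ*)))). -/
/-- **APA-QS bound with learning rate (Corollary `cor-GAA-learning rate`).**
With `n` experts, uniform prior, learning rate `η > 0`, `η`-scaled profile
`f_η x = (f x)^η` with inverse `g_η y = g (y^(1/η))`, weight updates
`P_t θ = f_η (λ(ω_t, ξ_t θ)) · P_{t-1} θ` and pseudo-prediction losses
`ψ_t = g_η (∑_θ f_η (λ(ω_t, ξ_t θ)) P_{t-1} θ / ∑_θ P_{t-1} θ)`, for every expert `θ*`:
`g (∏_t f ψ_t) ≤ g (f (A_T θ*) · f (g_η (1/n)))`, where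
`A_T θ* = g (∏_t f (λ(ω_t, ξ_t θ*)))`. -/
theorem stmt_5
    {Ω Γ : Type*}
    (lam : Ω → Γ → ℝ) (hlam_nonneg : ∀ (w : Ω) (γ : Γ), 0 ≤ lam w γ)
    -- weighting profile f with inverse g
    (f g : ℝ → ℝ)
    (hf_cont : ContinuousOn f (Set.Ici (0 : ℝ)))
    (hf_anti : StrictAntiOn f (Set.Ici (0 : ℝ)))
    (hf0 : f 0 = 1)
    (hf_mem : ∀ x : ℝ, 0 ≤ x → f x ∈ Set.Ioc (0 : ℝ) 1)
    (hf_lim : Filter.Tendsto f Filter.atTop (nhds 0))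
    (hg_left : ∀ x : ℝ, 0 ≤ x → g (f x) = x)
    (hg_right : ∀ y ∈ Set.Ioc (0 : ℝ) 1, f (g y) = y)
    (hg_nonneg : ∀ y ∈ Set.Ioc (0 : ℝ) 1, 0 ≤ g y)
    -- learning rate and η-scaled profile
    (η : ℝ) (hη : 0 < η)
    (fη gη : ℝ → ℝ)
    (hfη : ∀ x : ℝ, fη x = f x ^ η)
    (hgη : ∀ y : ℝ, gη y = g (y ^ (1 / η)))
    -- n experts, outcomes, predictions
    (n : ℕ) (hn : 1 ≤ n) (T : ℕ) (ω : Fin T → Ω) (ξ : Fin T → Fin n → Γ)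
    -- uniform prior and weight updates
    (P : ℕ → Fin n → ℝ)
    (hP_init : ∀ θ, P 0 θ = 1 / (n : ℝ))
    (hP_step : ∀ (t : Fin T) (θ : Fin n),
      P ((t : ℕ) + 1) θ = fη (lam (ω t) (ξ t θ)) * P (t : ℕ) θ)
    -- pseudo-prediction losses
    (ψ : Fin T → ℝ)
    (hψ : ∀ t : Fin T, ψ t =
      gη ((∑ θ, fη (lam (ω t) (ξ t θ)) * P (t : ℕ) θ) / ∑ θ, P (t : ℕ) θ)) :
    ∀ θs : Fin n,
      g (∏ t, f (ψ t)) ≤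
        g (f (g (∏ t, f (lam (ω t) (ξ t θs)))) * f (gη (1 / (n : ℝ)))) := by
  intro θs
  have hnpos : (0:ℝ) < n := by
    have : (0:ℕ) < n := by omega
    exact_mod_cast this
  have hinv_pos : (0:ℝ) < 1 / n := by positivity
  have hinv_le : (1:ℝ) / n ≤ 1 := by
    rw [div_le_one hnpos]; exact_mod_cast hn
  haveI : Nonempty (Fin n) := Fin.pos_iff_nonempty.mp (by omega)
  have hfη_mem : ∀ x : ℝ, 0 ≤ x → fη x ∈ Set.Ioc (0:ℝ) 1 := by
    intro x hx
    obtain ⟨h1, h2⟩ := hf_mem x hx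
    rw [hfη]
    exact ⟨Real.rpow_pos_of_pos h1 η, Real.rpow_le_one h1.le h2 hη.le⟩
  -- antitonicity of g on (0,1]
  have g_anti : ∀ y1 ∈ Set.Ioc (0:ℝ) 1, ∀ y2 ∈ Set.Ioc (0:ℝ) 1, y1 ≤ y2 → g y2 ≤ g y1 := by
    intro y1 h1 y2 h2 hle
    by_contra hc
    push_neg at hc
    have := hf_anti (hg_nonneg y1 h1) (hg_nonneg y2 h2) hc
    rw [hg_right y1 h1, hg_right y2 h2] at this
    linarith
  -- positivity and boundedness of weights
  have hP_bound : ∀ k, k ≤ T → ∀ θ, 0 < P k θ ∧ P k θ ≤ 1 / n := by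
    intro k
    induction k with
    | zero => intro _ θ; rw [hP_init]; exact ⟨hinv_pos, le_refl _⟩
    | succ k ih =>
      intro hk θ
      have hkT : k < T := by omega
      obtain ⟨hp, hle⟩ := ih (by omega) θ
      rw [hP_step ⟨k, hkT⟩ θ]
      obtain ⟨hq1, hq2⟩ := hfη_mem _ (hlam_nonneg _ _)
      refine ⟨mul_pos hq1 hp, ?_⟩
      calc fη (lam (ω ⟨k, hkT⟩) (ξ ⟨k, hkT⟩ θ)) * P k θ ≤ 1 * P k θ :=
            mul_le_mul_of_nonneg_right hq2 hp.le
        _ = P k θ := one_mul _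
        _ ≤ 1 / n := hle
  set W : ℕ → ℝ := fun k => ∑ θ, P k θ with hWdef
  have hW_pos : ∀ k, k ≤ T → 0 < W k := by
    intro k hk
    exact Finset.sum_pos (fun θ _ => (hP_bound k hk θ).1) Finset.univ_nonempty
  have hW0 : W 0 = 1 := by
    simp only [hWdef, hP_init]
    rw [Finset.sum_const, Finset.card_univ, Fintype.card_fin, nsmul_eq_mul]
    field_simp
  have hW_succ : ∀ t : Fin T, W ((t:ℕ)+1) = ∑ θ, fη (lam (ω t) (ξ t θ)) * P (t:ℕ) θ := by
    intro t
    simp only [hWdef]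
    exact Finset.sum_congr rfl fun θ _ => hP_step t θ
  have hW_mono : ∀ t : Fin T, W ((t:ℕ)+1) ≤ W (t:ℕ) := by
    intro t
    rw [hW_succ t]
    refine Finset.sum_le_sum fun θ _ => ?_
    obtain ⟨hq1, hq2⟩ := hfη_mem _ (hlam_nonneg (ω t) (ξ t θ))
    calc fη (lam (ω t) (ξ t θ)) * P (t:ℕ) θ ≤ 1 * P (t:ℕ) θ :=
          mul_le_mul_of_nonneg_right hq2 (hP_bound _ t.2.le θ).1.le
      _ = P (t:ℕ) θ := one_mul _
  have hW_le_one : ∀ k, k ≤ T → W k ≤ 1 := by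
    intro k
    induction k with
    | zero => intro _; rw [hW0]
    | succ k ih =>
      intro hk
      have hkT : k < T := by omega
      exact le_trans (hW_mono ⟨k, hkT⟩) (ih (by omega))
  -- f applied to pseudo-losses
  have hfψ : ∀ t : Fin T, f (ψ t) = (W ((t:ℕ)+1) / W (t:ℕ)) ^ (1/η) := by
    intro t
    have hr_pos : 0 < W ((t:ℕ)+1) / W (t:ℕ) :=
      div_pos (hW_pos _ (by omega)) (hW_pos _ t.2.le)
    have hr_le : W ((t:ℕ)+1) / W (t:ℕ) ≤ 1 :=
      (div_le_one (hW_pos _ t.2.le)).mpr (hW_mono t)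
    have hmem : (W ((t:ℕ)+1) / W (t:ℕ)) ^ (1/η) ∈ Set.Ioc (0:ℝ) 1 :=
      ⟨Real.rpow_pos_of_pos hr_pos _, Real.rpow_le_one hr_pos.le hr_le (by positivity)⟩
    rw [hψ t, hgη, ← hW_succ t]
    exact hg_right _ hmem
  -- telescoping product
  set Fψ : ℕ → ℝ := fun i => if h : i < T then f (ψ ⟨i, h⟩) else 1 with hFψdef
  have hprod_eq : (∏ t : Fin T, f (ψ t)) = ∏ i ∈ Finset.range T, Fψ i := by
    rw [← Fin.prod_univ_eq_prod_range Fψ T]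
    refine Finset.prod_congr rfl fun t _ => ?_
    simp only [hFψdef, dif_pos t.2]
  have htel : ∀ k, k ≤ T → ∏ i ∈ Finset.range k, Fψ i = W k ^ (1/η) := by
    intro k
    induction k with
    | zero => intro _; simp [hW0]
    | succ k ih =>
      intro hk
      have hkT : k < T := by omega
      rw [Finset.prod_range_succ, ih (by omega)]
      simp only [hFψdef, dif_pos hkT]
      rw [hfψ ⟨k, hkT⟩]
      simp only [Fin.val_mk]
      have hWk := hW_pos k (by omega)
      have hWk1 := hW_pos (k+1) (by omega)
      rw [← Real.mul_rpow hWk.le (div_pos hWk1 hWk).le]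
      congr 1
      field_simp
  -- expert θs losses
  set G : ℕ → ℝ := fun i => if h : i < T then f (lam (ω ⟨i, h⟩) (ξ ⟨i, h⟩ θs)) else 1 with hGdef
  have hG_mem : ∀ i, G i ∈ Set.Ioc (0:ℝ) 1 := by
    intro i
    simp only [hGdef]
    split
    · exact hf_mem _ (hlam_nonneg _ _)
    · exact ⟨one_pos, le_refl 1⟩
  have hB_eq : (∏ t : Fin T, f (lam (ω t) (ξ t θs))) = ∏ i ∈ Finset.range T, G i := by
    rw [← Fin.prod_univ_eq_prod_range G T]
    refine Finset.prod_congr rfl fun t _ => ?_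
    simp only [hGdef, dif_pos t.2]
  set B : ℝ := ∏ i ∈ Finset.range T, G i with hBdef
  have hB_pos : 0 < B := Finset.prod_pos fun i _ => (hG_mem i).1
  have hB_le : B ≤ 1 := Finset.prod_le_one (fun i _ => (hG_mem i).1.le) (fun i _ => (hG_mem i).2)
  -- formula for P k θs
  have hPθs : ∀ k, k ≤ T → P k θs = (1/n) * (∏ i ∈ Finset.range k, G i) ^ η := by
    intro k
    induction k with
    | zero => intro _; simp [hP_init]
    | succ k ih =>
      intro hk
      have hkT : k < T := by omega
      rw [hP_step ⟨k, hkT⟩ θs, ih (by omega), Finset.prod_range_succ]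
      have hprodpos : (0:ℝ) < ∏ i ∈ Finset.range k, G i := Finset.prod_pos fun i _ => (hG_mem i).1
      rw [Real.mul_rpow hprodpos.le (hG_mem k).1.le, hfη]
      have : G k = f (lam (ω ⟨k, hkT⟩) (ξ ⟨k, hkT⟩ θs)) := by simp only [hGdef, dif_pos hkT]
      rw [this]
      ring
  -- W T ≥ P T θs
  have hWT_ge : (1/n) * B ^ η ≤ W T := by
    rw [← hPθs T le_rfl]
    exact Finset.single_le_sum (fun θ _ => (hP_bound T le_rfl θ).1.le) (Finset.mem_univ θs)
  -- compute both sides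
  have hLHS : (∏ t : Fin T, f (ψ t)) = W T ^ (1/η) := by
    rw [hprod_eq, htel T le_rfl]
  have hBη : ((1/(n:ℝ)) * B ^ η) ^ (1/η) = (1/(n:ℝ)) ^ (1/η) * B := by
    rw [Real.mul_rpow hinv_pos.le (by positivity), ← Real.rpow_mul hB_pos.le,
      mul_one_div_cancel hη.ne', Real.rpow_one]
  have hineq : (1/(n:ℝ)) ^ (1/η) * B ≤ W T ^ (1/η) := by
    rw [← hBη]
    exact Real.rpow_le_rpow (by positivity) hWT_ge (by positivity)
  have hninv_mem : ((1:ℝ)/n) ^ (1/η) ∈ Set.Ioc (0:ℝ) 1 :=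
    ⟨Real.rpow_pos_of_pos hinv_pos _, Real.rpow_le_one hinv_pos.le hinv_le (by positivity)⟩
  have hRHS1 : f (g (∏ t : Fin T, f (lam (ω t) (ξ t θs)))) = B := by
    rw [hB_eq]
    exact hg_right B ⟨hB_pos, hB_le⟩
  have hRHS2 : f (gη (1/(n:ℝ))) = (1/(n:ℝ)) ^ (1/η) := by
    rw [hgη]
    exact hg_right _ hninv_mem
  rw [hLHS, hRHS1, hRHS2]
  refine g_anti _ ⟨?_, ?_⟩ _ ⟨?_, ?_⟩ ?_
  · exact mul_pos hB_pos hninv_mem.1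
  · calc B * (1/(n:ℝ)) ^ (1/η) ≤ 1 * 1 :=
        mul_le_mul hB_le hninv_mem.2 hninv_mem.1.le one_pos.le
      _ = 1 := one_mul 1
  · exact Real.rpow_pos_of_pos (hW_pos T le_rfl) _
  · exact Real.rpow_le_one (hW_pos T le_rfl).le (hW_le_one T le_rfl) (by positivity)
  · rw [mul_comm]; exact hineq
end

section
/- Let Ω and Γ be sets, λ : Ω × Γ → [0,∞) a loss function, f : [0,∞) → (0,1] a weighting profile with inverse g, η ∈ (0,∞), f_η(x) = f(x)^η with inverse g_η. Consider n experts with uniform prior P_0(θ) = 1/n, outcomes ω_1,…,ω_T, predictions ξ_t(θ) ∈ Γ, weights P_t(θ) = f_η(λ(ω_t, ξ_t(θ)))·P_{t−1}(θ), and pseudo-predictions ψ_t(ω) = g_η(∑_{θ=1}^n f_η(λ(ω, ξ_t(θ))) P_{t−1}(θ) / ∑_{θ=1}^n P_{t−1}(θ)) for ω ∈ Ω. Suppose in each round t the learner plays γ_t ∈ Γ satisfying λ(ω, γ_t) ≤ ψ_t(ω) for all ω ∈ Ω. Then for every expert θ*, g(∏_{t=1}^T f(λ(ω_t, γ_t)))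 ≤ g(f(A_T(θ*)) · f(g_η(1/n))), where A_T(θ*) = g(∏_{t=1}^T f(λ(ω_t, ξ_t(θ*)))). -/
/-- **AA-QS regret bound for a mixable game (substitution step).**
With `n` experts, uniform prior, learning rate `η > 0`, `η`-scaled profile
`f_η = f^η` with inverse `g_η y = g (y^(1/η))`, weight updates
`P_t θ = f_η (λ(ω_t, ξ_t θ)) · P_{t-1} θ`, pseudo-predictions
`ψ_t(ω) = g_η (∑_θ f_η (λ(ω, ξ_t θ)) P_{t-1} θ / ∑_θ P_{t-1} θ)`, and a learner playing
`γ_t` with `λ(ω, γ_t) ≤ ψ_t(ω)` for all `ω`, for every expert `θ*`: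
`g (∏_t f (λ(ω_t, γ_t))) ≤ g (f (A_T θ*) · f (g_η (1/n)))`, where
`A_T θ* = g (∏_t f (λ(ω_t, ξ_t θ*)))`. -/
theorem stmt_6
    {Ω Γ : Type*}
    (lam : Ω → Γ → ℝ) (hlam_nonneg : ∀ (w : Ω) (γ : Γ), 0 ≤ lam w γ)
    -- weighting profile f with inverse g
    (f g : ℝ → ℝ)
    (hf_cont : ContinuousOn f (Set.Ici (0 : ℝ)))
    (hf_anti : StrictAntiOn f (Set.Ici (0 : ℝ)))
    (hf0 : f 0 = 1)
    (hf_mem : ∀ x : ℝ, 0 ≤ x → f x ∈ Set.Ioc (0 : ℝ) 1)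
    (hf_lim : Filter.Tendsto f Filter.atTop (nhds 0))
    (hg_left : ∀ x : ℝ, 0 ≤ x → g (f x) = x)
    (hg_right : ∀ y ∈ Set.Ioc (0 : ℝ) 1, f (g y) = y)
    (hg_nonneg : ∀ y ∈ Set.Ioc (0 : ℝ) 1, 0 ≤ g y)
    -- learning rate and η-scaled profile
    (η : ℝ) (hη : 0 < η)
    (fη gη : ℝ → ℝ)
    (hfη : ∀ x : ℝ, fη x = f x ^ η)
    (hgη : ∀ y : ℝ, gη y = g (y ^ (1 / η)))
    -- n experts, outcomes, predictions
    (n : ℕ) (hn : 1 ≤ n) (T : ℕ) (ω : Fin T → Ω) (ξ : Fin T → Fin n → Γ)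
    -- uniform prior and weight updates
    (P : ℕ → Fin n → ℝ)
    (hP_init : ∀ θ, P 0 θ = 1 / (n : ℝ))
    (hP_step : ∀ (t : Fin T) (θ : Fin n),
      P ((t : ℕ) + 1) θ = fη (lam (ω t) (ξ t θ)) * P (t : ℕ) θ)
    -- pseudo-predictions, as functions of the outcome
    (ψ : Fin T → Ω → ℝ)
    (hψ : ∀ (t : Fin T) (w : Ω), ψ t w =
      gη ((∑ θ, fη (lam w (ξ t θ)) * P (t : ℕ) θ) / ∑ θ, P (t : ℕ) θ))
    -- the learner's predictions, substituting the pseudo-predictions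
    (γL : Fin T → Γ)
    (hsub : ∀ (t : Fin T) (w : Ω), lam w (γL t) ≤ ψ t w) :
    ∀ θs : Fin n,
      g (∏ t, f (lam (ω t) (γL t))) ≤
        g (f (g (∏ t, f (lam (ω t) (ξ t θs)))) * f (gη (1 / (n : ℝ)))) := by

  intro θs
  have hηne : η ≠ 0 := ne_of_gt hη
  have hnpos : (0 : ℝ) < (n : ℝ) := by exact_mod_cast Nat.lt_of_lt_of_le Nat.zero_lt_one hn
  have hfpos : ∀ x : ℝ, 0 ≤ x → 0 < f x := fun x hx => (hf_mem x hx).1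
  have hfle1 : ∀ x : ℝ, 0 ≤ x → f x ≤ 1 := fun x hx => (hf_mem x hx).2
  have hfηpos : ∀ x : ℝ, 0 ≤ x → 0 < fη x := fun x hx => by
    rw [hfη]; exact Real.rpow_pos_of_pos (hfpos x hx) η
  have hfηle1 : ∀ x : ℝ, 0 ≤ x → fη x ≤ 1 := fun x hx => by
    rw [hfη]; exact Real.rpow_le_one (hfpos x hx).le (hfle1 x hx) hη.le
  have hfη_anti : ∀ x y : ℝ, 0 ≤ x → x ≤ y → fη y ≤ fη x := fun x y hx hxy => by
    rw [hfη, hfη]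
    exact Real.rpow_le_rpow (hfpos y (hx.trans hxy)).le
      (hf_anti.antitoneOn (Set.mem_Ici.mpr hx) (Set.mem_Ici.mpr (hx.trans hxy)) hxy) hη.le
  have hg_anti : ∀ y1 y2 : ℝ, y1 ∈ Set.Ioc (0:ℝ) 1 → y2 ∈ Set.Ioc (0:ℝ) 1 → y1 ≤ y2 →
      g y2 ≤ g y1 := by
    intro y1 y2 h1 h2 h12
    by_contra hlt
    push_neg at hlt
    have h := hf_anti (Set.mem_Ici.mpr (hg_nonneg y1 h1)) (Set.mem_Ici.mpr (hg_nonneg y2 h2)) hlt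
    rw [hg_right _ h2, hg_right _ h1] at h
    exact absurd h12 (not_le.mpr h)
  have hmem_pow : ∀ y ∈ Set.Ioc (0:ℝ) 1, y ^ (1/η) ∈ Set.Ioc (0:ℝ) 1 := fun y hy =>
    ⟨Real.rpow_pos_of_pos hy.1 _, Real.rpow_le_one hy.1.le hy.2 (by positivity)⟩
  have hfηg : ∀ y ∈ Set.Ioc (0:ℝ) 1, fη (gη y) = y := by
    intro y hy
    rw [hgη, hfη, hg_right _ (hmem_pow y hy), ← Real.rpow_mul hy.1.le, one_div,
      inv_mul_cancel₀ hηne, Real.rpow_one]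
  -- positivity of the weights
  have hP_pos : ∀ k, k ≤ T → ∀ θ, 0 < P k θ := by
    intro k
    induction k with
    | zero => intro _ θ; rw [hP_init]; positivity
    | succ k ih =>
      intro hk θ
      have hkT : k < T := hk
      rw [hP_step ⟨k, hkT⟩ θ]
      exact mul_pos (hfηpos _ (hlam_nonneg _ _)) (ih hkT.le θ)
  set qγ : ℕ → ℝ := fun s => if h : s < T then fη (lam (ω ⟨s, h⟩) (γL ⟨s, h⟩)) else 1 with hqγ
  set qξ : ℕ → ℝ := fun s => if h : s < T then fη (lam (ω ⟨s, h⟩) (ξ ⟨s, h⟩ θs)) else 1 with hqξ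
  set W : ℕ → ℝ := fun k => ∑ θ, P k θ with hWdef
  have hW_pos : ∀ k, k ≤ T → 0 < W k := by
    intro k hk
    have : Nonempty (Fin n) := ⟨⟨0, hn⟩⟩
    exact Finset.sum_pos (fun θ _ => hP_pos k hk θ) Finset.univ_nonempty
  -- key substitution step
  have hstep : ∀ k, (hk : k < T) → W (k+1) ≤ qγ k * W k := by
    intro k hk
    set t : Fin T := ⟨k, hk⟩ with ht
    have hWk : 0 < W k := hW_pos k hk.le
    have hS : W (k+1) = ∑ θ, fη (lam (ω t) (ξ t θ)) * P k θ :=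
      Finset.sum_congr rfl fun θ _ => hP_step t θ
    have hS_pos : 0 < W (k+1) := hW_pos (k+1) hk
    have hS_le : W (k+1) ≤ W k := by
      rw [hS]
      apply Finset.sum_le_sum
      intro θ _
      have h1 := hfηle1 _ (hlam_nonneg (ω t) (ξ t θ))
      have h2 := (hP_pos k hk.le θ).le
      nlinarith [hfηpos (lam (ω t) (ξ t θ)) (hlam_nonneg (ω t) (ξ t θ))]
    have hr_mem : W (k+1) / W k ∈ Set.Ioc (0:ℝ) 1 :=
      ⟨div_pos hS_pos hWk, (div_le_one hWk).mpr hS_le⟩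
    have hψval : ψ t (ω t) = gη (W (k+1) / W k) := by
      rw [hψ t (ω t), ← hS]
    have hψ_nonneg : 0 ≤ ψ t (ω t) := by
      rw [hψval, hgη]
      exact hg_nonneg _ (hmem_pow _ hr_mem)
    have hfηψ : fη (ψ t (ω t)) = W (k+1) / W k := by
      rw [hψval]; exact hfηg _ hr_mem
    have hle : W (k+1) / W k ≤ qγ k := by
      rw [← hfηψ, hqγ]
      simp only [hk, dif_pos]
      exact hfη_anti _ _ (hlam_nonneg (ω t) (γL t)) (hsub t (ω t))
    calc W (k+1) = (W (k+1) / W k) * W k := by field_simp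
      _ ≤ qγ k * W k := mul_le_mul_of_nonneg_right hle hWk.le
  -- telescoping bound on the total weight
  have hW_le : ∀ k, k ≤ T → W k ≤ ∏ s ∈ Finset.range k, qγ s := by
    intro k
    induction k with
    | zero =>
      intro _
      simp [hWdef, hP_init, Finset.sum_const, Finset.card_univ]
      exact le_of_eq (mul_inv_cancel₀ (ne_of_gt hnpos))
    | succ k ih =>
      intro hk
      have hkT : k < T := hk
      have hq_nonneg : 0 ≤ qγ k := by
        rw [hqγ]; simp only [hkT, dif_pos]
        exact (hfηpos _ (hlam_nonneg _ _)).le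
      calc W (k+1) ≤ qγ k * W k := hstep k hkT
        _ ≤ qγ k * ∏ s ∈ Finset.range k, qγ s :=
            mul_le_mul_of_nonneg_left (ih hkT.le) hq_nonneg
        _ = ∏ s ∈ Finset.range (k+1), qγ s := by rw [Finset.prod_range_succ]; ring
  -- explicit formula for the weight of expert θs
  have hP_formula : ∀ k, k ≤ T → P k θs = (1 / (n:ℝ)) * ∏ s ∈ Finset.range k, qξ s := by
    intro k
    induction k with
    | zero => intro _; simp [hP_init]
    | succ k ih =>
      intro hk
      have hkT : k < T := hk
      rw [hP_step ⟨k, hkT⟩ θs, ih hkT.le, Finset.prod_range_succ, hqξ]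
      simp only [hkT, dif_pos]
      ring
  -- translate range-products to Fin-products
  set a : ℝ := ∏ t : Fin T, f (lam (ω t) (γL t)) with ha
  set b : ℝ := ∏ t : Fin T, f (lam (ω t) (ξ t θs)) with hb
  have ha_mem : a ∈ Set.Ioc (0:ℝ) 1 := by
    constructor
    · exact Finset.prod_pos fun t _ => hfpos _ (hlam_nonneg _ _)
    · exact Finset.prod_le_one (fun t _ => (hfpos _ (hlam_nonneg _ _)).le)
        (fun t _ => hfle1 _ (hlam_nonneg _ _))
  have hb_mem : b ∈ Set.Ioc (0:ℝ) 1 := by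
    constructor
    · exact Finset.prod_pos fun t _ => hfpos _ (hlam_nonneg _ _)
    · exact Finset.prod_le_one (fun t _ => (hfpos _ (hlam_nonneg _ _)).le)
        (fun t _ => hfle1 _ (hlam_nonneg _ _))
  have hQγ : ∏ s ∈ Finset.range T, qγ s = a ^ η := by
    rw [← Fin.prod_univ_eq_prod_range, ha, ← Real.finset_prod_rpow _ _
      (fun t _ => (hfpos _ (hlam_nonneg _ _)).le) η]
    exact Finset.prod_congr rfl fun t _ => by
      rw [hqγ]; simp only [t.isLt, dif_pos, Fin.eta]; rw [hfη]
  have hQξ : ∏ s ∈ Finset.range T, qξ s = b ^ η := by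
    rw [← Fin.prod_univ_eq_prod_range, hb, ← Real.finset_prod_rpow _ _
      (fun t _ => (hfpos _ (hlam_nonneg _ _)).le) η]
    exact Finset.prod_congr rfl fun t _ => by
      rw [hqξ]; simp only [t.isLt, dif_pos, Fin.eta]; rw [hfη]
  -- main inequality on the η-powers
  have hmain : (1 / (n:ℝ)) * b ^ η ≤ a ^ η := by
    calc (1 / (n:ℝ)) * b ^ η = P T θs := by rw [hP_formula T le_rfl, hQξ]
      _ ≤ W T := Finset.single_le_sum (fun θ _ => (hP_pos T le_rfl θ).le) (Finset.mem_univ θs)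
      _ ≤ ∏ s ∈ Finset.range T, qγ s := hW_le T le_rfl
      _ = a ^ η := hQγ
  -- take (1/η) powers
  have hcn : (1 / (n:ℝ)) ^ (1/η) ∈ Set.Ioc (0:ℝ) 1 :=
    hmem_pow _ ⟨by positivity, by rw [div_le_one hnpos]; exact_mod_cast hn⟩
  have hkey : b * (1 / (n:ℝ)) ^ (1/η) ≤ a := by
    have hb0 : (0:ℝ) ≤ b ^ η := Real.rpow_nonneg hb_mem.1.le η
    have h1 : ((1 / (n:ℝ)) * b ^ η) ^ (1/η) ≤ (a ^ η) ^ (1/η) :=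
      Real.rpow_le_rpow (mul_nonneg (by positivity) hb0) hmain (by positivity)
    rw [← Real.rpow_mul ha_mem.1.le, mul_one_div, div_self hηne, Real.rpow_one,
      Real.mul_rpow (by positivity) hb0,
      ← Real.rpow_mul hb_mem.1.le, mul_one_div, div_self hηne, Real.rpow_one] at h1
    linarith [h1]
  -- finish
  have hrhs : f (g b) * f (gη (1 / (n:ℝ))) = b * (1 / (n:ℝ)) ^ (1/η) := by
    rw [hg_right _ hb_mem, hgη, hg_right _ hcn]
  rw [hrhs]
  exact hg_anti _ _ ⟨mul_pos hb_mem.1 hcn.1, mul_le_one₀ hb_mem.2 hcn.1.le hcn.2⟩ ha_mem hkey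
end

section
/- Let u : [0,∞) → [0,∞) be a continuous, strictly increasing bijection with u(0) = 0, let f(x) = e^{−u(x)}, η ∈ (0,∞), f_η = f^η with inverse g_η. Consider n experts with uniform prior P_0(θ) = 1/n, outcomes ω_1,…,ω_T ∈ Ω, predictions ξ_t(θ) ∈ Γ, weights P_t(θ) = f_η(λ(ω_t, ξ_t(θ)))·P_{t−1}(θ), and pseudo-predictions ψ_t(ω) = g_η(∑_{θ=1}^n f_η(λ(ω, ξ_t(θ))) P_{t−1}(θ) / ∑_{θ=1}^n P_{t−1}(θ)). Suppose in each round t the learner plays γ_t ∈ Γ with λ(ω, γ_t) ≤ ψ_t(ω) for all ω ∈ Ω. Then for every expert θ and every T, ∑_{t=1}^T u(λ(ω_t, γ_t)) ≤ ∑_{t=1}^T u(λ(ω_t, ξ_t(θ))) + ln(n)/η; equivalently, Q^u_T(λ(ω_1,γ_1),…,λ(ω_T,γ_T)) ≤ u^{−1}(u(Q^u_T(λ(ω_1,ξ_1(θ)),…,λ(ω_T,ξ_T(θ)))) + ln(n)/η). -/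
/-!
The learner runs exponential weights on the composite loss `u ∘ λ`. Writing `W_t = ∑_θ P_t(θ)`,
the pseudo-prediction on the actual outcome is `ψ_t(ω_t) = u⁻¹(ln(W_t / W_{t+1}) / η)`, so the
substitution property says that the learner's composite loss in round `t` is at most
`ln(W_t / W_{t+1}) / η`. Telescoping bounds the cumulative composite loss by `-ln W_T / η`, and
`W_T ≥ P_T(θ) = e^{-η L_T(θ)} / n` turns this into `L_T(θ) + ln n / η`. The quasi-sum form
follows because `u⁻¹` is monotone.
-/

open Real Finset

theorem Fin.sum_univ_sub {M : Type*} [AddCommGroup M] (a : ℕ → M) (T : ℕ) :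
    ∑ t : Fin T, (a (t + 1) - a t) = a T - a 0 := by
  rw [Fin.sum_univ_eq_sum_range (fun k => a (k + 1) - a k)]
  exact sum_range_sub a T

theorem le_iff_le_inv {u v : ℝ → ℝ} (hu : StrictMonoOn u (Set.Ici 0))
    (hv_right : ∀ y, 0 ≤ y → u (v y) = y) (hv_nonneg : ∀ y, 0 ≤ y → 0 ≤ v y) {x s : ℝ}
    (hx : 0 ≤ x) (hs : 0 ≤ s) : u x ≤ s ↔ x ≤ v s := by
  conv_lhs => rw [← hv_right s hs]
  exact hu.le_iff_le hx (hv_nonneg s hs)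

section ExponentialWeights

variable {ι : Type*} {T : ℕ} {η : ℝ} {L : Fin T → ι → ℝ} {P : ℕ → ι → ℝ}

theorem weight_pos (hP : ∀ (t : Fin T) θ, P (t + 1) θ = exp (-(η * L t θ)) * P t θ)
    (hP0 : ∀ θ, 0 < P 0 θ) {m : ℕ} (hm : m ≤ T) (θ : ι) : 0 < P m θ := by
  induction m with
  | zero => exact hP0 θ
  | succ m ih =>
    rw [hP ⟨m, hm⟩ θ]
    exact mul_pos (exp_pos _) (ih (by omega))

theorem log_weight_eq (hP : ∀ (t : Fin T) θ, P (t + 1) θ = exp (-(η * L t θ)) * P t θ)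
    (hP0 : ∀ θ, 0 < P 0 θ) (θ : ι) :
    log (P T θ) = log (P 0 θ) - η * ∑ t, L t θ := by
  have hstep (t : Fin T) : log (P (t + 1) θ) - log (P t θ) = -(η * L t θ) := by
    rw [hP t θ, log_mul (exp_ne_zero _) (weight_pos hP hP0 t.isLt.le θ).ne', log_exp]
    ring
  have := Fin.sum_univ_sub (fun m => log (P m θ)) T
  simp only [hstep, sum_neg_distrib, ← mul_sum] at this
  linarith

variable [Fintype ι]

theorem log_sum_weight_succ_div_nonpos
    (hP : ∀ (t : Fin T) θ, P (t + 1) θ = exp (-(η * L t θ)) * P t θ) (hP0 : ∀ θ, 0 < P 0 θ)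
    (hη : 0 ≤ η) (hL : ∀ t θ, 0 ≤ L t θ) (t : Fin T) :
    log ((∑ θ, P (t + 1) θ) / ∑ θ, P t θ) ≤ 0 := by
  have hPt θ := (weight_pos hP hP0 t.isLt.le θ).le
  have hWt : 0 ≤ ∑ θ, P t θ := sum_nonneg fun θ _ => hPt θ
  refine log_nonpos (div_nonneg (sum_nonneg fun θ _ => (weight_pos hP hP0 t.isLt θ).le) hWt)
    (div_le_one_of_le₀ (sum_le_sum fun θ _ => ?_) hWt)
  rw [hP t θ]
  exact mul_le_of_le_one_left (hPt θ)
    (exp_le_one_iff.2 (neg_nonpos.2 (mul_nonneg hη (hL t θ))))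

theorem sum_le_sum_add_neg_log_prior_div
    (hP : ∀ (t : Fin T) θ, P (t + 1) θ = exp (-(η * L t θ)) * P t θ) (hη : 0 < η)
    (hP0 : ∀ θ, 0 < P 0 θ) (hP0_sum : ∑ θ, P 0 θ = 1) {ℓ : Fin T → ℝ}
    (hℓ : ∀ t : Fin T, ℓ t ≤ -log ((∑ θ, P (t + 1) θ) / ∑ θ, P t θ) / η) (θ : ι) :
    ∑ t, ℓ t ≤ ∑ t, L t θ + -log (P 0 θ) / η := by
  have hW {m : ℕ} (hm : m ≤ T) : 0 < ∑ θ, P m θ :=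
    sum_pos (fun θ' _ => weight_pos hP hP0 hm θ') ⟨θ, mem_univ θ⟩
  have learner : η * ∑ t, ℓ t ≤ -log (∑ θ, P T θ) :=
    calc η * ∑ t, ℓ t
        ≤ ∑ t : Fin T, -(log (∑ θ, P (t + 1) θ) - log (∑ θ, P t θ)) := by
          rw [mul_sum]
          refine sum_le_sum fun t _ => ?_
          rw [← log_div (hW t.isLt).ne' (hW t.isLt.le).ne', ← le_div_iff₀' hη]
          exact hℓ t
      _ = -log (∑ θ, P T θ) := by
          rw [sum_neg_distrib, Fin.sum_univ_sub (fun m => log (∑ θ, P m θ)), hP0_sum, log_one,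
            sub_zero]
  have expert : log (P T θ) ≤ log (∑ θ, P T θ) :=
    log_le_log (weight_pos hP hP0 le_rfl θ)
      (single_le_sum (fun θ' _ => (weight_pos hP hP0 le_rfl θ').le) (mem_univ θ))
  rw [log_weight_eq hP hP0 θ] at expert
  refine le_of_mul_le_mul_left ?_ hη
  rw [mul_add, mul_div_cancel₀ _ hη.ne']
  linarith

end ExponentialWeights

theorem stmt_8_general
    {Ω Γ : Type*}
    -- u : [0,∞) → [0,∞) continuous strictly increasing bijection, v its inverse
    (u v : ℝ → ℝ)
    (hu_mono : StrictMonoOn u (Set.Ici (0 : ℝ)))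
    (hu_maps : ∀ x : ℝ, 0 ≤ x → 0 ≤ u x)
    (hv_right : ∀ y : ℝ, 0 ≤ y → u (v y) = y)
    (hv_nonneg : ∀ y : ℝ, 0 ≤ y → 0 ≤ v y)
    -- learning rate, weighting profile, η-scaled profile and its inverse
    (η : ℝ) (hη : 0 < η)
    (fη gη : ℝ → ℝ)
    (hfη_def : ∀ x, fη x = Real.exp (-(η * u x)))
    (hgη_def : ∀ y, gη y = v (-Real.log y / η))
    -- loss function
    (lam : Ω → Γ → ℝ) (hlam_nonneg : ∀ (w : Ω) (γ : Γ), 0 ≤ lam w γ)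
    -- n experts, outcomes, predictions
    (n : ℕ) (T : ℕ) (ω : Fin T → Ω) (ξ : Fin T → Fin n → Γ)
    -- uniform prior and weight updates
    (P : ℕ → Fin n → ℝ)
    (hP_init : ∀ θ, P 0 θ = 1 / (n : ℝ))
    (hP_step : ∀ (t : Fin T) (θ : Fin n),
      P ((t : ℕ) + 1) θ = fη (lam (ω t) (ξ t θ)) * P (t : ℕ) θ)
    -- pseudo-predictions
    (ψ : Fin T → Ω → ℝ)
    (hψ : ∀ (t : Fin T) (w : Ω), ψ t w =
      gη ((∑ θ, fη (lam w (ξ t θ)) * P (t : ℕ) θ) / ∑ θ, P (t : ℕ) θ))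
    -- the learner's predictions, substituting the pseudo-predictions
    (γL : Fin T → Γ)
    (hsub : ∀ (t : Fin T) (w : Ω), lam w (γL t) ≤ ψ t w) :
    (∀ θ : Fin n,
      ∑ t, u (lam (ω t) (γL t)) ≤ ∑ t, u (lam (ω t) (ξ t θ)) + Real.log n / η) ∧
    (∀ θ : Fin n,
      v (∑ t, u (lam (ω t) (γL t))) ≤
        v (u (v (∑ t, u (lam (ω t) (ξ t θ)))) + Real.log n / η)) := by
  have hP (t : Fin T) θ :
      P (t + 1) θ = exp (-(η * u (lam (ω t) (ξ t θ)))) * P t θ := by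
    rw [hP_step, hfη_def]
  have hL t θ : 0 ≤ u (lam (ω t) (ξ t θ)) := hu_maps _ (hlam_nonneg _ _)
  have regret (θ : Fin n) :
      ∑ t, u (lam (ω t) (γL t)) ≤ ∑ t, u (lam (ω t) (ξ t θ)) + log n / η := by
    have hn : (0 : ℝ) < n := Nat.cast_pos.2 θ.pos
    have hP0 θ' : 0 < P 0 θ' := by rw [hP_init]; positivity
    have hP0_sum : ∑ θ', P 0 θ' = 1 := by simp [hP_init, hn.ne']
    have hround (t : Fin T) : u (lam (ω t) (γL t)) ≤
        -log ((∑ θ', P (t + 1) θ') / ∑ θ', P t θ') / η := by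
      have hs : 0 ≤ -log ((∑ θ', P (t + 1) θ') / ∑ θ', P t θ') / η :=
        div_nonneg (neg_nonneg.2 (log_sum_weight_succ_div_nonpos hP hP0 hη.le hL t)) hη.le
      refine (le_iff_le_inv hu_mono hv_right hv_nonneg (hlam_nonneg _ _) hs).2 ?_
      simpa only [hψ, hgη_def, ← hP_step] using hsub t (ω t)
    simpa [hP_init] using sum_le_sum_add_neg_log_prior_div hP hη hP0 hP0_sum hround θ
  refine ⟨regret, fun θ => ?_⟩
  have hA : 0 ≤ ∑ t, u (lam (ω t) (γL t)) :=
    sum_nonneg fun t _ => hu_maps _ (hlam_nonneg _ _)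
  have hB : 0 ≤ ∑ t, u (lam (ω t) (ξ t θ)) := sum_nonneg fun t _ => hL t θ
  rw [hv_right _ hB]
  refine (le_iff_le_inv hu_mono hv_right hv_nonneg (hv_nonneg _ hA)
    (add_nonneg hB (div_nonneg (log_natCast_nonneg n) hη.le))).1 ?_
  rw [hv_right _ hA]
  exact regret θ

/-- **Change of variables for the AA (Corollary `corollary:change of variables of the AA`).**
For `f x = exp (−u x)`, `f_η x = exp (−η·u x)` with inverse `g_η y = v (−ln y / η)`
(`v` the inverse of `u`), the AA-QS with `n` experts, uniform prior, weight updates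
`P_t θ = f_η (λ(ω_t, ξ_t θ)) · P_{t-1} θ`, pseudo-predictions
`ψ_t(ω) = g_η (∑_θ f_η (λ(ω, ξ_t θ)) P_{t-1} θ / ∑_θ P_{t-1} θ)` and learner's
predictions `γ_t` satisfying `λ(ω, γ_t) ≤ ψ_t(ω)` for all `ω` achieves, for every
expert `θ` and horizon `T`:
`∑_t u (λ(ω_t, γ_t)) ≤ ∑_t u (λ(ω_t, ξ_t θ)) + ln n / η`; equivalently
`Q^u_T(learner) ≤ u⁻¹(u (Q^u_T(θ)) + ln n / η)`. -/
theorem stmt_8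
    {Ω Γ : Type*}
    -- u : [0,∞) → [0,∞) continuous strictly increasing bijection, v its inverse
    (u v : ℝ → ℝ)
    (hu_cont : ContinuousOn u (Set.Ici (0 : ℝ)))
    (hu_mono : StrictMonoOn u (Set.Ici (0 : ℝ)))
    (hu0 : u 0 = 0)
    (hu_maps : ∀ x : ℝ, 0 ≤ x → 0 ≤ u x)
    (hu_surj : ∀ y : ℝ, 0 ≤ y → ∃ x : ℝ, 0 ≤ x ∧ u x = y)
    (hv_left : ∀ x : ℝ, 0 ≤ x → v (u x) = x)
    (hv_right : ∀ y : ℝ, 0 ≤ y → u (v y) = y)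
    (hv_nonneg : ∀ y : ℝ, 0 ≤ y → 0 ≤ v y)
    -- learning rate, weighting profile, η-scaled profile and its inverse
    (η : ℝ) (hη : 0 < η)
    (f fη gη : ℝ → ℝ)
    (hf_def : ∀ x, f x = Real.exp (-(u x)))
    (hfη_def : ∀ x, fη x = Real.exp (-(η * u x)))
    (hgη_def : ∀ y, gη y = v (-Real.log y / η))
    -- loss function
    (lam : Ω → Γ → ℝ) (hlam_nonneg : ∀ (w : Ω) (γ : Γ), 0 ≤ lam w γ)
    -- n experts, outcomes, predictions
    (n : ℕ) (hn : 1 ≤ n) (T : ℕ) (ω : Fin T → Ω) (ξ : Fin T → Fin n → Γ)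
    -- uniform prior and weight updates
    (P : ℕ → Fin n → ℝ)
    (hP_init : ∀ θ, P 0 θ = 1 / (n : ℝ))
    (hP_step : ∀ (t : Fin T) (θ : Fin n),
      P ((t : ℕ) + 1) θ = fη (lam (ω t) (ξ t θ)) * P (t : ℕ) θ)
    -- pseudo-predictions
    (ψ : Fin T → Ω → ℝ)
    (hψ : ∀ (t : Fin T) (w : Ω), ψ t w =
      gη ((∑ θ, fη (lam w (ξ t θ)) * P (t : ℕ) θ) / ∑ θ, P (t : ℕ) θ))
    -- the learner's predictions, substituting the pseudo-predictions
    (γL : Fin T → Γ)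
    (hsub : ∀ (t : Fin T) (w : Ω), lam w (γL t) ≤ ψ t w) :
    (∀ θ : Fin n,
      ∑ t, u (lam (ω t) (γL t)) ≤ ∑ t, u (lam (ω t) (ξ t θ)) + Real.log n / η) ∧
    (∀ θ : Fin n,
      v (∑ t, u (lam (ω t) (γL t))) ≤
        v (u (v (∑ t, u (lam (ω t) (ξ t θ)))) + Real.log n / η)) :=
  stmt_8_general u v hu_mono hu_maps hv_right hv_nonneg η hη fη gη hfη_def hgη_def lam hlam_nonneg n
    T ω ξ P hP_init hP_step ψ hψ γL hsub
end

section
/- Let (Ω, Γ, λ) be a regular local prediction game: Γ is a compact topological space, for each ω ∈ Ω the map γ ↦ λ(ω, γ) ∈ [0,∞] is continuous, there exists γ ∈ Γ with λ(ω, γ) < ∞ for all ω ∈ Ω, and for every γ ∈ Γ there exists ω ∈ Ω with λ(ω, γ) ≠ 0. Let f : [0,∞] → [0,1] be continuous and strictly decreasing with f(0) = 1, f(∞) = 0 and f(x) > 0 for all x < ∞. If c ∈ ℝ is such that for every γ' ∈ Γ there exists γ ∈ Γ with f(λ(ω, γ)) ≥ f(λ(ω, γ'))^c for all ω ∈ Ω,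 then c ≥ 1. In particular, the mixability constant c(f) = inf{ c ∈ ℝ : for every pseudo-prediction ψ induced by a probability distribution on Γ there exists γ ∈ Γ with f(λ(ω, γ)) ≥ f(ψ(ω))^c for all ω } satisfies c(f) ≥ 1. -/
/-! If `c < 1`, iterating the hypothesis from a prediction `γ₀` of everywhere finite loss gives
predictions `γₙ` with `f (λ(ω, γ₀)) ^ (c ^ n) ≤ f (λ(ω, γₙ))`. For `0 ≤ c` these conditions cut out
a decreasing sequence of nonempty closed subsets of the compact space `Γ`; a point `γ` common to
all of them has `f (λ(ω, γ)) ≥ 1 = f 0` for every `ω`, i.e. identically zero loss, which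
regularity forbids. For `c < 0` a single step already gives this. Dirac distributions reduce the
statement about `c(f)` to the first one. -/

open MeasureTheory Filter Topology
open scoped ENNReal

theorem tendsto_rpow_pow_nhds_one {x c : ℝ} (hx : 0 < x) (hc₀ : 0 ≤ c) (hc₁ : c < 1) :
    Tendsto (fun n : ℕ => x ^ c ^ n) atTop (𝓝 1) := by
  have hcont : ContinuousAt (fun y : ℝ => x ^ y) 0 :=
    Real.continuousAt_const_rpow hx.ne'
  simpa [Function.comp_def] using hcont.tendsto.comp (tendsto_pow_atTop_nhds_zero_of_lt_one hc₀ hc₁)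

section Improvement

variable {Ω Γ : Type*} {u : Γ → Ω → ℝ} {c : ℝ} {γ₀ : Γ}

theorem exists_forall_rpow_pow_le (hc : 0 ≤ c) (hu₀ : ∀ w, 0 ≤ u γ₀ w)
    (hstep : ∀ γ', ∃ γ, ∀ w, u γ' w ^ c ≤ u γ w) (n : ℕ) :
    ∃ γ, ∀ w, u γ₀ w ^ c ^ n ≤ u γ w := by
  induction n with
  | zero => exact ⟨γ₀, fun w => by simp⟩
  | succ n ih =>
    obtain ⟨γ, hγ⟩ := ih
    obtain ⟨γ', hγ'⟩ := hstep γ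
    refine ⟨γ', fun w => ?_⟩
    calc u γ₀ w ^ c ^ (n + 1) = (u γ₀ w ^ c ^ n) ^ c := by
          rw [← Real.rpow_mul (hu₀ w), pow_succ]
      _ ≤ u γ w ^ c := Real.rpow_le_rpow (Real.rpow_nonneg (hu₀ w) _) (hγ w) hc
      _ ≤ u γ' w := hγ' w

variable [TopologicalSpace Γ] [CompactSpace Γ]

theorem exists_forall_one_le_of_nonneg (hu : ∀ w, Continuous fun γ => u γ w)
    (hu₀ : ∀ w, 0 < u γ₀ w) (hu₁ : ∀ w, u γ₀ w ≤ 1) (hc₀ : 0 ≤ c) (hc₁ : c < 1)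
    (hstep : ∀ γ', ∃ γ, ∀ w, u γ' w ^ c ≤ u γ w) :
    ∃ γ, ∀ w, 1 ≤ u γ w := by
  let K : ℕ → Set Γ := fun n => {γ | ∀ w, u γ₀ w ^ c ^ n ≤ u γ w}
  have hK_anti : ∀ n, K (n + 1) ⊆ K n := fun n γ hγ w =>
    (Real.rpow_le_rpow_of_exponent_ge (hu₀ w) (hu₁ w)
      (pow_le_pow_of_le_one hc₀ hc₁.le n.le_succ)).trans (hγ w)
  have hK_closed : ∀ n, IsClosed (K n) := fun n => by
    simp only [K, Set.ofPred_forall]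
    exact isClosed_iInter fun w => isClosed_le continuous_const (hu w)
  obtain ⟨γ, hγ⟩ := IsCompact.nonempty_iInter_of_sequence_nonempty_isCompact_isClosed K hK_anti
    (exists_forall_rpow_pow_le hc₀ (fun w => (hu₀ w).le) hstep) (hK_closed 0).isCompact
    hK_closed
  rw [Set.mem_iInter] at hγ
  exact ⟨γ, fun w =>
    le_of_tendsto' (tendsto_rpow_pow_nhds_one (hu₀ w) hc₀ hc₁) fun n => hγ n w⟩

theorem exists_forall_one_le (hu : ∀ w, Continuous fun γ => u γ w)
    (hu₀ : ∀ w, 0 < u γ₀ w) (hu₁ : ∀ w, u γ₀ w ≤ 1) (hc : c < 1)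
    (hstep : ∀ γ', ∃ γ, ∀ w, u γ' w ^ c ≤ u γ w) :
    ∃ γ, ∀ w, 1 ≤ u γ w := by
  rcases lt_or_ge c 0 with hc₀ | hc₀
  · obtain ⟨γ, hγ⟩ := hstep γ₀
    exact ⟨γ, fun w =>
      (Real.one_le_rpow_of_pos_of_le_one_of_nonpos (hu₀ w) (hu₁ w) hc₀.le).trans (hγ w)⟩
  · exact exists_forall_one_le_of_nonneg hu hu₀ hu₁ hc₀ hc hstep

end Improvement

theorem stmt_9_general
    {Ω Γ : Type*} [TopologicalSpace Γ] [CompactSpace Γ]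
    [MeasurableSpace Γ] [BorelSpace Γ]
    (lam : Ω → Γ → ℝ≥0∞)
    -- regularity: continuity of the loss in the prediction
    (hlam_cont : ∀ w : Ω, Continuous fun γ => lam w γ)
    -- regularity: some prediction has everywhere finite loss
    (hlam_fin : ∃ γ : Γ, ∀ w : Ω, lam w γ ≠ ⊤)
    -- regularity: no prediction has identically zero loss
    (hlam_nz : ∀ γ : Γ, ∃ w : Ω, lam w γ ≠ 0)
    -- weighting profile on [0,∞]
    (f : ℝ≥0∞ → ℝ)
    (hf_cont : Continuous f)
    (hf_anti : StrictAnti f)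
    (hf0 : f 0 = 1)
    (hf_pos : ∀ x : ℝ≥0∞, x ≠ ⊤ → 0 < f x) :
    -- Dirac pseudo-predictions force c ≥ 1 …
    (∀ c : ℝ,
      (∀ γ' : Γ, ∃ γ : Γ, ∀ w : Ω, f (lam w γ') ^ c ≤ f (lam w γ)) → 1 ≤ c) ∧
    -- … and in particular every c in the set defining c(f) is ≥ 1, i.e. c(f) ≥ 1
    (∀ c : ℝ,
      (∀ Q : Measure Γ, IsProbabilityMeasure Q →
        ∃ γ : Γ, ∀ w : Ω, (∫ γ', f (lam w γ') ∂Q) ^ c ≤ f (lam w γ)) → 1 ≤ c) := by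
  have hcont : ∀ w, Continuous fun γ => f (lam w γ) := fun w => hf_cont.comp (hlam_cont w)
  have dirac : ∀ c : ℝ,
      (∀ γ' : Γ, ∃ γ : Γ, ∀ w : Ω, f (lam w γ') ^ c ≤ f (lam w γ)) → 1 ≤ c := by
    intro c hstep
    by_contra! hc
    obtain ⟨γ₀, hγ₀⟩ := hlam_fin
    obtain ⟨γ, hγ⟩ := exists_forall_one_le hcont (fun w => hf_pos _ (hγ₀ w))
      (fun w => hf0 ▸ hf_anti.antitone zero_le) hc hstep
    obtain ⟨w, hw⟩ := hlam_nz γ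
    exact hw <| nonpos_iff_eq_zero.mp <| hf_anti.le_iff_ge.mp (hf0 ▸ hγ w)
  refine ⟨dirac, fun c hc => dirac c fun γ' => ?_⟩
  obtain ⟨γ, hγ⟩ := hc (Measure.dirac γ') inferInstance
  refine ⟨γ, fun w => ?_⟩
  simpa only [integral_dirac' _ _ (hcont w).stronglyMeasurable] using hγ w

/-- **The mixability constant is at least 1 (Lemma `lemma-c-geq-1`).**
For a regular local prediction game `(Ω, Γ, λ)` with `λ : Ω × Γ → [0,∞]` and a
weighting profile `f : [0,∞] → [0,1]` (continuous, strictly decreasing, `f 0 = 1`,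
`f ∞ = 0`, `f x > 0` for `x < ∞`): any `c ∈ ℝ` such that for every `γ'` there is `γ`
with `f (λ(ω, γ)) ≥ f (λ(ω, γ'))^c` for all `ω` satisfies `c ≥ 1`; in particular,
every member of the set defining the mixability constant `c(f)` (with pseudo-predictions
induced by probability distributions on `Γ`) is at least `1`, i.e. `c(f) ≥ 1`. -/
theorem stmt_9
    {Ω Γ : Type*} [TopologicalSpace Γ] [CompactSpace Γ]
    [MeasurableSpace Γ] [BorelSpace Γ]
    (lam : Ω → Γ → ℝ≥0∞)
    -- regularity: continuity of the loss in the prediction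
    (hlam_cont : ∀ w : Ω, Continuous fun γ => lam w γ)
    -- regularity: some prediction has everywhere finite loss
    (hlam_fin : ∃ γ : Γ, ∀ w : Ω, lam w γ ≠ ⊤)
    -- regularity: no prediction has identically zero loss
    (hlam_nz : ∀ γ : Γ, ∃ w : Ω, lam w γ ≠ 0)
    -- weighting profile on [0,∞]
    (f : ℝ≥0∞ → ℝ)
    (hf_cont : Continuous f)
    (hf_anti : StrictAnti f)
    (hf0 : f 0 = 1)
    (hf_top : f ⊤ = 0)
    (hf_pos : ∀ x : ℝ≥0∞, x ≠ ⊤ → 0 < f x) :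
    -- Dirac pseudo-predictions force c ≥ 1 …
    (∀ c : ℝ,
      (∀ γ' : Γ, ∃ γ : Γ, ∀ w : Ω, f (lam w γ') ^ c ≤ f (lam w γ)) → 1 ≤ c) ∧
    -- … and in particular every c in the set defining c(f) is ≥ 1, i.e. c(f) ≥ 1
    (∀ c : ℝ,
      (∀ Q : Measure Γ, IsProbabilityMeasure Q →
        ∃ γ : Γ, ∀ w : Ω, (∫ γ', f (lam w γ') ∂Q) ^ c ≤ f (lam w γ)) → 1 ≤ c) :=
  stmt_9_general lam hlam_cont hlam_fin hlam_nz f hf_cont hf_anti hf0 hf_pos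
end

section
/- Let Ω and Γ be sets, λ : Ω × Γ → [0,∞) a loss function, f : [0,∞) → (0,1] a weighting profile with inverse g, and c ≥ 1 a constant. Consider n experts with uniform prior P_0(θ) = 1/n, outcomes ω_1,…,ω_T ∈ Ω, predictions ξ_t(θ) ∈ Γ, weights P_t(θ) = f(λ(ω_t, ξ_t(θ)))·P_{t−1}(θ), and pseudo-prediction losses ψ_t(ω_t) = g(∑_{θ=1}^n f(λ(ω_t, ξ_t(θ))) P_{t−1}(θ) / ∑_{θ=1}^n P_{t−1}(θ)). Suppose in each round t the learner plays γ_t ∈ Γ with f(λ(ω_t, γ_t)) ≥ f(ψ_t(ω_t))^c. Then for every expert θ*, g(∏_{t=1}^T f(λ(ω_t, γ_t))) ≤ g(f(A_T(θ*))^c / n^c), where A_T(θ*) = g(∏_{t=1}^T f(λ(ω_t, ξ_t(θ*)))). -/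
/-- **Regret bound for possibly non-mixable losses (Theorem `thm-GAPA-bound`, part 1).**
With `n` experts, uniform prior, weight updates `P_t θ = f (λ(ω_t, ξ_t θ)) · P_{t-1} θ`,
pseudo-prediction losses `ψ_t = g (∑_θ f (λ(ω_t, ξ_t θ)) P_{t-1} θ / ∑_θ P_{t-1} θ)`,
mixability constant `c ≥ 1`, and a learner playing `γ_t` with
`f (λ(ω_t, γ_t)) ≥ f (ψ_t)^c`, for every expert `θ*`:
`g (∏_t f (λ(ω_t, γ_t))) ≤ g (f (A_T θ*)^c / n^c)`, where
`A_T θ* = g (∏_t f (λ(ω_t, ξ_t θ*)))`. -/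
theorem stmt_10
    {Ω Γ : Type*}
    (lam : Ω → Γ → ℝ) (hlam_nonneg : ∀ (w : Ω) (γ : Γ), 0 ≤ lam w γ)
    -- weighting profile f with inverse g
    (f g : ℝ → ℝ)
    (hf_cont : ContinuousOn f (Set.Ici (0 : ℝ)))
    (hf_anti : StrictAntiOn f (Set.Ici (0 : ℝ)))
    (hf0 : f 0 = 1)
    (hf_mem : ∀ x : ℝ, 0 ≤ x → f x ∈ Set.Ioc (0 : ℝ) 1)
    (hf_lim : Filter.Tendsto f Filter.atTop (nhds 0))
    (hg_left : ∀ x : ℝ, 0 ≤ x → g (f x) = x)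
    (hg_right : ∀ y ∈ Set.Ioc (0 : ℝ) 1, f (g y) = y)
    (hg_nonneg : ∀ y ∈ Set.Ioc (0 : ℝ) 1, 0 ≤ g y)
    -- mixability constant
    (c : ℝ) (hc : 1 ≤ c)
    -- n experts, outcomes, predictions
    (n : ℕ) (hn : 1 ≤ n) (T : ℕ) (ω : Fin T → Ω) (ξ : Fin T → Fin n → Γ)
    -- uniform prior and weight updates
    (P : ℕ → Fin n → ℝ)
    (hP_init : ∀ θ, P 0 θ = 1 / (n : ℝ))
    (hP_step : ∀ (t : Fin T) (θ : Fin n),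
      P ((t : ℕ) + 1) θ = f (lam (ω t) (ξ t θ)) * P (t : ℕ) θ)
    -- pseudo-prediction losses
    (ψ : Fin T → ℝ)
    (hψ : ∀ t : Fin T, ψ t =
      g ((∑ θ, f (lam (ω t) (ξ t θ)) * P (t : ℕ) θ) / ∑ θ, P (t : ℕ) θ))
    -- the learner's predictions, substituting with constant c
    (γL : Fin T → Γ)
    (hsub : ∀ t : Fin T, f (ψ t) ^ c ≤ f (lam (ω t) (γL t))) :
    ∀ θs : Fin n,
      g (∏ t, f (lam (ω t) (γL t))) ≤
        g (f (g (∏ t, f (lam (ω t) (ξ t θs)))) ^ c / (n : ℝ) ^ c) := by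
  intro θs
  have hn0 : (0 : ℝ) < (n : ℝ) := by exact_mod_cast hn
  -- g is antitone on (0,1]
  have g_anti : ∀ x ∈ Set.Ioc (0:ℝ) 1, ∀ y ∈ Set.Ioc (0:ℝ) 1, x ≤ y → g y ≤ g x := by
    intro x hx y hy hxy
    by_contra h
    push_neg at h
    have := hf_anti (Set.mem_Ici.2 (hg_nonneg x hx)) (Set.mem_Ici.2 (hg_nonneg y hy)) h
    rw [hg_right x hx, hg_right y hy] at this
    exact absurd hxy (not_le.2 this)
  set W : ℕ → ℝ := fun t => ∑ θ, P t θ with hW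
  have hne : (Finset.univ : Finset (Fin n)).Nonempty := by
    haveI : Nonempty (Fin n) := Fin.pos_iff_nonempty.mp hn
    exact Finset.univ_nonempty
  -- positivity of P up to T
  have hPpos : ∀ t, t ≤ T → ∀ θ, 0 < P t θ := by
    intro t
    induction t with
    | zero => intro _ θ; rw [hP_init θ]; positivity
    | succ t ih =>
      intro ht θ
      have htT : t < T := Nat.lt_of_succ_le ht
      rw [hP_step ⟨t, htT⟩ θ]
      exact mul_pos (hf_mem _ (hlam_nonneg _ _)).1 (ih (le_of_lt htT) θ)
  have hWpos : ∀ t, t ≤ T → 0 < W t := fun t ht =>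
    Finset.sum_pos (fun θ _ => hPpos t ht θ) hne
  have hW0 : W 0 = 1 := by
    simp [hW, hP_init, Finset.sum_const, Finset.card_univ]
    field_simp
  have hWstep : ∀ t : Fin T, W ((t : ℕ) + 1) = ∑ θ, f (lam (ω t) (ξ t θ)) * P (t : ℕ) θ := by
    intro t; exact Finset.sum_congr rfl fun θ _ => hP_step t θ
  -- the ratio is in (0,1]
  have hratio : ∀ t : Fin T, W ((t:ℕ)+1) / W t ∈ Set.Ioc (0:ℝ) 1 := by
    intro t
    have hle : W ((t:ℕ)+1) ≤ W (t:ℕ) := by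
      rw [hWstep t]
      apply Finset.sum_le_sum
      intro θ _
      have hfθ := hf_mem _ (hlam_nonneg (ω t) (ξ t θ))
      nlinarith [hPpos (t:ℕ) (le_of_lt t.isLt) θ, hfθ.2, hfθ.1]
    have h1 := hWpos (t:ℕ) (le_of_lt t.isLt)
    have h2 := hWpos ((t:ℕ)+1) t.isLt
    constructor
    · positivity
    · exact div_le_one_of_le₀ hle (le_of_lt h1)
  have hfψ : ∀ t : Fin T, f (ψ t) = W ((t:ℕ)+1) / W (t:ℕ) := by
    intro t
    rw [hψ t, ← hWstep t, hg_right _ (hratio t)]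
  -- telescoping
  have tel : ∀ m, m ≤ T → ∏ i ∈ Finset.range m, (W (i+1) / W i) = W m := by
    intro m
    induction m with
    | zero => intro _; simpa using hW0.symm
    | succ m ih =>
      intro hm
      rw [Finset.prod_range_succ, ih (le_of_lt (Nat.lt_of_succ_le hm))]
      have := hWpos m (le_of_lt (Nat.lt_of_succ_le hm))
      field_simp
  have hprodψ : ∏ t : Fin T, f (ψ t) = W T := by
    rw [show (∏ t : Fin T, f (ψ t)) = ∏ t : Fin T, (W ((t:ℕ)+1) / W (t:ℕ)) from
      Finset.prod_congr rfl fun t _ => hfψ t]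
    rw [Fin.prod_univ_eq_prod_range (fun i => W (i+1) / W i) T]
    exact tel T le_rfl
  -- P T θs as a product
  have F : ℕ → ℝ := fun s => if h : s < T then f (lam (ω ⟨s, h⟩) (ξ ⟨s, h⟩ θs)) else 1
  have hPprod : ∀ t, t ≤ T →
      P t θs = (1 / (n:ℝ)) * ∏ s ∈ Finset.range t,
        (fun s => if h : s < T then f (lam (ω ⟨s, h⟩) (ξ ⟨s, h⟩ θs)) else 1) s := by
    intro t
    induction t with
    | zero => intro _; simp [hP_init]
    | succ t ih =>
      intro ht
      have htT : t < T := Nat.lt_of_succ_le ht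
      rw [hP_step ⟨t, htT⟩ θs, ih (le_of_lt htT), Finset.prod_range_succ]
      simp only [dif_pos htT]
      ring
  have hprodξ : (∏ t : Fin T, f (lam (ω t) (ξ t θs))) =
      ∏ s ∈ Finset.range T,
        (fun s => if h : s < T then f (lam (ω ⟨s, h⟩) (ξ ⟨s, h⟩ θs)) else 1) s := by
    rw [← Fin.prod_univ_eq_prod_range]
    exact Finset.prod_congr rfl fun t _ => by simp [t.isLt]
  have hPT : P T θs = (∏ t : Fin T, f (lam (ω t) (ξ t θs))) / (n : ℝ) := by
    rw [hPprod T le_rfl, ← hprodξ]; ring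
  -- key inequalities
  have hWT : W T ≤ 1 := by
    have := tel T le_rfl
    rw [← this]
    apply Finset.prod_le_one
    · intro i hi; exact le_of_lt (hratio ⟨i, Finset.mem_range.mp hi⟩).1
    · intro i hi; exact (hratio ⟨i, Finset.mem_range.mp hi⟩).2
  have hWTpos : 0 < W T := hWpos T le_rfl
  have hPle : P T θs ≤ W T := by
    have : W T = ∑ θ, P T θ := rfl
    rw [this]
    exact Finset.single_le_sum (fun θ _ => le_of_lt (hPpos T le_rfl θ)) (Finset.mem_univ θs)
  -- lower bound on learner's product
  have hψnonneg : ∀ t : Fin T, (0:ℝ) ≤ f (ψ t) ^ c := fun t =>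
    Real.rpow_nonneg (le_of_lt (by rw [hfψ t]; exact (hratio t).1)) c
  have hlower : (P T θs) ^ c ≤ ∏ t : Fin T, f (lam (ω t) (γL t)) := by
    calc (P T θs) ^ c ≤ (W T) ^ c :=
          Real.rpow_le_rpow (le_of_lt (hPpos T le_rfl θs)) hPle (le_trans zero_le_one hc)
      _ = ∏ t : Fin T, f (ψ t) ^ c := by
          rw [Real.finset_prod_rpow _ _ (fun t _ => le_of_lt (by rw [hfψ t]; exact (hratio t).1)) c,
            hprodψ]
      _ ≤ ∏ t : Fin T, f (lam (ω t) (γL t)) :=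
          Finset.prod_le_prod (fun t _ => hψnonneg t) (fun t _ => hsub t)
  -- memberships
  have hprodγ_mem : (∏ t : Fin T, f (lam (ω t) (γL t))) ∈ Set.Ioc (0:ℝ) 1 := by
    constructor
    · exact Finset.prod_pos fun t _ => (hf_mem _ (hlam_nonneg _ _)).1
    · exact Finset.prod_le_one (fun t _ => le_of_lt (hf_mem _ (hlam_nonneg _ _)).1)
        (fun t _ => (hf_mem _ (hlam_nonneg _ _)).2)
  have hprodξ_mem : (∏ t : Fin T, f (lam (ω t) (ξ t θs))) ∈ Set.Ioc (0:ℝ) 1 := by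
    constructor
    · exact Finset.prod_pos fun t _ => (hf_mem _ (hlam_nonneg _ _)).1
    · exact Finset.prod_le_one (fun t _ => le_of_lt (hf_mem _ (hlam_nonneg _ _)).1)
        (fun t _ => (hf_mem _ (hlam_nonneg _ _)).2)
  -- identify the RHS argument with (P T θs)^c
  have hRHS : f (g (∏ t : Fin T, f (lam (ω t) (ξ t θs)))) ^ c / (n : ℝ) ^ c
      = (P T θs) ^ c := by
    rw [hg_right _ hprodξ_mem, hPT, Real.div_rpow (le_of_lt hprodξ_mem.1) (le_of_lt hn0)]
  have hRHS_mem : (P T θs) ^ c ∈ Set.Ioc (0:ℝ) 1 :=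
    ⟨Real.rpow_pos_of_pos (hPpos T le_rfl θs) c, le_trans hlower hprodγ_mem.2⟩
  rw [hRHS]
  exact g_anti _ hRHS_mem _ hprodγ_mem hlower
end
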